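/- arXiv:1606.04068 — 3 statements merged into one kernel-verified Lean document; each statement's English description precedes it below -/
import Mathlib

section
/- Let H be a closed subgroup of G = SL(d,ℝ) ⋉ (ℝ^d)^k such that π(H) = SL(d,ℝ) and n_−(x) ∈ H for all x ∈ ℝ^{d−1}. Then there exist a linear subspace U ⊆ ℝ^k and ξ ∈ (e_1^⊥)^k such that H = (1_d,ξ) H_U (1_d,ξ)^{−1}, where H_U = SL(d,ℝ) ⋉ L(U). -/
open Matrix MeasureTheory Topology Filter Bornology

noncomputable section

/-- The Euclidean norm of a vector in `ℝ^n` (represented as `Fin n → ℝ`). -/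
def enorm' {n : ℕ} (v : Fin n → ℝ) : ℝ := Real.sqrt (∑ i, v i ^ 2)

/-- The unit sphere `S_1^{d-1}` in `ℝ^d`. -/
def unitSphere (d : ℕ) : Set (Fin d → ℝ) := {v | ∑ i, v i ^ 2 = 1}

/-- Prepend the entry `t` to a vector `x ∈ ℝ^{d-1}`, giving the vector `(t, x)ᵗ ∈ ℝ^d`. -/
def cons1 {d : ℕ} (t : ℝ) (x : Fin (d - 1) → ℝ) : Fin d → ℝ :=
  fun i => if h : (i : ℕ) = 0 then t else x ⟨(i : ℕ) - 1, by have := i.isLt; omega⟩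

/-- Delete the first entry of a vector in `ℝ^d`, giving `u_⊥ ∈ ℝ^{d-1}`. -/
def chop {d : ℕ} (y : Fin d → ℝ) : Fin (d - 1) → ℝ :=
  fun i => y ⟨(i : ℕ) + 1, by have := i.isLt; omega⟩

/-- The first standard basis vector `e₁ ∈ ℝ^d`. -/
def e1vec (d : ℕ) : Fin d → ℝ := fun i => if (i : ℕ) = 0 then 1 else 0

/-- The standard inner product on `ℝ^n`. -/
def dotp {n : ℕ} (v w : Fin n → ℝ) : ℝ := ∑ i, v i * w i

/-- `SL(d, ℝ)`. -/
abbrev SLd (d : ℕ) := Matrix.SpecialLinearGroup (Fin d) ℝ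

/-- The property that a matrix in `SL(d,ℝ)` has integer entries. -/
def IntEntries {d : ℕ} (A : SLd d) : Prop :=
  ∀ i j : Fin d, ∃ n : ℤ, (A : Matrix (Fin d) (Fin d) ℝ) i j = n

lemma IntEntries.mul {d : ℕ} {A B : SLd d} (hA : IntEntries A) (hB : IntEntries B) :
    IntEntries (A * B) := by
  intro i j
  choose nA hnA using hA
  choose nB hnB using hB
  refine ⟨∑ l, nA i l * nB l j, ?_⟩
  rw [Matrix.SpecialLinearGroup.coe_mul, Matrix.mul_apply]
  push_cast
  exact Finset.sum_congr rfl fun l _ => by rw [hnA, hnB]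

lemma IntEntries.one {d : ℕ} : IntEntries (1 : SLd d) := by
  intro i j
  refine ⟨if i = j then 1 else 0, ?_⟩
  rw [Matrix.SpecialLinearGroup.coe_one, Matrix.one_apply]
  split <;> simp

lemma IntEntries.inv {d : ℕ} {A : SLd d} (hA : IntEntries A) : IntEntries A⁻¹ := by
  intro i j
  choose nA hnA using hA
  have hmap : (A : Matrix (Fin d) (Fin d) ℝ)
      = (Int.castRingHom ℝ).mapMatrix (Matrix.of nA) := by
    ext i' j'; simp [hnA]
  refine ⟨(Matrix.of nA).adjugate i j, ?_⟩
  rw [Matrix.SpecialLinearGroup.coe_inv, hmap, ← RingHom.map_adjugate]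
  simp [RingHom.mapMatrix_apply, Matrix.map_apply]

/-- The group `G = SL(d,ℝ) ⋉ (ℝ^d)^k`, with elements `(M, ξ)` and multiplication law
`(M,ξ)(M',ξ') = (MM', ξ + Mξ')`. -/
@[ext] structure ASL (d k : ℕ) where
  M : SLd d
  v : Fin k → Fin d → ℝ

namespace ASL

variable {d k : ℕ}

instance : Mul (ASL d k) :=
  ⟨fun g h => ⟨g.M * h.M, fun j => g.v j + (g.M : Matrix (Fin d) (Fin d) ℝ).mulVec (h.v j)⟩⟩
instance : One (ASL d k) := ⟨⟨1, fun _ => 0⟩⟩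
instance : Inv (ASL d k) :=
  ⟨fun g => ⟨g.M⁻¹, fun j => -(((g.M⁻¹ : SLd d) : Matrix (Fin d) (Fin d) ℝ).mulVec (g.v j))⟩⟩

instance : Group (ASL d k) where
  mul_assoc a b c := by
    ext j i
    · show (((a.M * b.M) * c.M : SLd d) : Matrix (Fin d) (Fin d) ℝ) j i
        = ((a.M * (b.M * c.M) : SLd d) : Matrix (Fin d) (Fin d) ℝ) j i
      rw [mul_assoc]
    · show (a.v j + (a.M : Matrix (Fin d) (Fin d) ℝ).mulVec (b.v j)
          + ((a.M * b.M : SLd d) : Matrix (Fin d) (Fin d) ℝ).mulVec (c.v j)) i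
        = (a.v j + (a.M : Matrix (Fin d) (Fin d) ℝ).mulVec
            (b.v j + (b.M : Matrix (Fin d) (Fin d) ℝ).mulVec (c.v j))) i
      simp [Matrix.mulVec_add, ← Matrix.mulVec_mulVec, add_assoc]
  one_mul a := by
    ext j i
    · show ((1 * a.M : SLd d) : Matrix (Fin d) (Fin d) ℝ) _ _ = _
      rw [one_mul]
    · show ((fun _ => (0 : Fin d → ℝ)) j
          + ((1 : SLd d) : Matrix (Fin d) (Fin d) ℝ).mulVec (a.v j)) i = a.v j i
      simp
  mul_one a := by
    ext j i
    · show ((a.M * 1 : SLd d) : Matrix (Fin d) (Fin d) ℝ) _ _ = _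
      rw [mul_one]
    · show (a.v j + (a.M : Matrix (Fin d) (Fin d) ℝ).mulVec
          ((fun _ => (0 : Fin d → ℝ)) j)) i = a.v j i
      simp
  inv_mul_cancel a := by
    ext j i
    · show ((a.M⁻¹ * a.M : SLd d) : Matrix (Fin d) (Fin d) ℝ) _ _
        = ((1 : SLd d) : Matrix (Fin d) (Fin d) ℝ) _ _
      rw [inv_mul_cancel]
    · show (-(((a.M⁻¹ : SLd d) : Matrix (Fin d) (Fin d) ℝ).mulVec (a.v j))
          + ((a.M⁻¹ : SLd d) : Matrix (Fin d) (Fin d) ℝ).mulVec (a.v j)) i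
        = (fun _ => (0 : Fin d → ℝ)) j i
      simp

instance : TopologicalSpace (ASL d k) :=
  TopologicalSpace.induced (fun g => ((g.M : Matrix (Fin d) (Fin d) ℝ), g.v)) inferInstance

instance : MeasurableSpace (ASL d k) := borel _

/-- The subgroup `Γ = SL(d,ℤ) ⋉ (ℤ^d)^k` of `G`. -/
def Gamma (d k : ℕ) : Subgroup (ASL d k) where
  carrier := {g | IntEntries g.M ∧ ∀ j i, ∃ n : ℤ, g.v j i = n}
  mul_mem' := by
    rintro a b ⟨haM, hav⟩ ⟨hbM, hbv⟩
    refine ⟨haM.mul hbM, ?_⟩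
    intro j i
    choose nA hnA using haM
    choose nav hnav using hav
    choose nbv hnbv using hbv
    refine ⟨nav j i + ∑ l, nA i l * nbv j l, ?_⟩
    show (a.v j + (a.M : Matrix (Fin d) (Fin d) ℝ).mulVec (b.v j)) i = _
    rw [Pi.add_apply]
    simp only [Matrix.mulVec, dotProduct]
    push_cast
    exact congrArg₂ (· + ·) (hnav j i)
      (Finset.sum_congr rfl fun l _ => by rw [hnA, hnbv])
  one_mem' := by
    refine ⟨IntEntries.one, ?_⟩
    intro j i
    exact ⟨0, by norm_num; rfl⟩
  inv_mem' := by
    rintro a ⟨haM, hav⟩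
    refine ⟨haM.inv, ?_⟩
    intro j i
    choose nI hnI using haM.inv
    choose nav hnav using hav
    refine ⟨-(∑ l, nI i l * nav j l), ?_⟩
    show (-(((a.M⁻¹ : SLd d) : Matrix (Fin d) (Fin d) ℝ).mulVec (a.v j))) i = _
    rw [Pi.neg_apply]
    simp only [Matrix.mulVec, dotProduct]
    push_cast
    exact congrArg Neg.neg (Finset.sum_congr rfl fun l _ => by rw [hnI i l, hnav])

/-- The embedding `SL(d,ℝ) → G`, `M ↦ (M, 0)`. -/
def ofSL {d k : ℕ} (M : SLd d) : ASL d k := ⟨M, fun _ _ => 0⟩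

/-- The element `(1_d, ξ) ∈ G`. -/
def ofVec {d k : ℕ} (ξ : Fin k → Fin d → ℝ) : ASL d k := ⟨1, ξ⟩

/-- For `g = (M,(ξ_1,…,ξ_k)) ∈ G`, the affine action `g^{[j]}(y) = M y + ξ_j` on `ℝ^d`. -/
def actj {d k : ℕ} (g : ASL d k) (j : Fin k) (y : Fin d → ℝ) : Fin d → ℝ :=
  (g.M : Matrix (Fin d) (Fin d) ℝ).mulVec y + g.v j

/-- The action of `G` on `(ℝ^d)^k`: `(M,ξ)w = Mw + ξ`. -/
def act {d k : ℕ} (g : ASL d k) (w : Fin k → Fin d → ℝ) : Fin k → Fin d → ℝ :=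
  fun j => (g.M : Matrix (Fin d) (Fin d) ℝ).mulVec (w j) + g.v j

end ASL

/-- The homogeneous space `X = G/Γ`. -/
abbrev XSpace (d k : ℕ) := ASL d k ⧸ ASL.Gamma d k

/-- The matrix `D(ρ) = diag(ρ^{d-1}, ρ^{-1}, …, ρ^{-1}) ∈ SL(d,ℝ)`. -/
def Dmat (d : ℕ) (ρ : ℝ) : SLd d :=
  if h : ρ ≠ 0 then
    ⟨Matrix.diagonal (fun i : Fin d => if (i : ℕ) = 0 then ρ ^ (d - 1) else ρ⁻¹), by
      rw [Matrix.det_diagonal]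
      rcases Nat.eq_zero_or_pos d with h0 | hpos
      · subst h0; simp
      · rw [Finset.prod_ite]
        have h1 : (Finset.univ.filter fun i : Fin d => (i : ℕ) = 0) = {⟨0, hpos⟩} := by
          ext i; simp [Fin.ext_iff]
        have h2 : (Finset.univ.filter fun i : Fin d => ¬(i : ℕ) = 0).card = d - 1 := by
          have := Finset.card_filter_add_card_filter_not
            (s := (Finset.univ : Finset (Fin d))) (p := fun i : Fin d => (i : ℕ) = 0)
          simp [h1] at this
          omega
        rw [h1]
        simp only [Finset.prod_const, Finset.card_singleton, pow_one]
        rw [h2, ← mul_pow, mul_inv_cancel₀ h, one_pow]⟩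
  else 1

/-- The matrix `n₋(x) ∈ SL(d,ℝ)` with first row `(1, 0ᵗ)` and remaining block rows `(x, 1_{d-1})`. -/
def nmat (d : ℕ) (x : Fin (d - 1) → ℝ) : SLd d :=
  ⟨Matrix.of (fun i j : Fin d => if (j : ℕ) = 0 then
      (if h : (i : ℕ) = 0 then 1 else x ⟨(i : ℕ) - 1, by have := i.isLt; omega⟩)
      else if i = j then 1 else 0), by
    rw [Matrix.det_of_lowerTriangular]
    · have hdiag : ∀ i : Fin d, (Matrix.of (fun i j : Fin d => if (j : ℕ) = 0 then
          (if h : (i : ℕ) = 0 then 1 else x ⟨(i : ℕ) - 1, by have := i.isLt; omega⟩)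
          else if i = j then 1 else 0) : Matrix (Fin d) (Fin d) ℝ) i i = 1 := by
        intro i
        by_cases h : (i : ℕ) = 0 <;> simp [h]
      simp [hdiag]
    · intro i j hij
      have h1 : ¬ (j : ℕ) = 0 := by
        intro h0
        have : (i : ℕ) < (j : ℕ) := hij
        omega
      have h2 : i ≠ j := fun h => by subst h; exact lt_irrefl _ hij
      simp [Matrix.of_apply, h1, h2]⟩

instance (d : ℕ) : TopologicalSpace (SLd d) :=
  TopologicalSpace.induced (fun g : SLd d => (g : Matrix (Fin d) (Fin d) ℝ)) inferInstance

instance (d : ℕ) : MeasurableSpace (SLd d) := borel _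

/-- `SL(d,ℤ)`, as a subgroup of `SL(d,ℝ)`. -/
def SLZ (d : ℕ) : Subgroup (SLd d) where
  carrier := {g | IntEntries g}
  mul_mem' := fun ha hb => ha.mul hb
  one_mem' := IntEntries.one
  inv_mem' := fun ha => ha.inv

/-- The homogeneous space `X' = SL(d,ℝ)/SL(d,ℤ)`. -/
abbrev XpSpace (d : ℕ) := SLd d ⧸ SLZ d

/-- The projection `π : X → X'` induced by `(M, ξ) ↦ M`. -/
def projX (d k : ℕ) : XSpace d k → XpSpace d :=
  Quotient.map' (fun g : ASL d k => g.M) (by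
    intro a b hab
    have h := QuotientGroup.leftRel_apply.mp hab
    exact QuotientGroup.leftRel_apply.mpr h.1)

/-- For `ξ = (ξ_1,…,ξ_k) ∈ (ℝ^d)^k` and `u ∈ ℝ^k`, the contraction `ξ·u = Σ_j u_j ξ_j ∈ ℝ^d`. -/
def xidot {d k : ℕ} (ξ : Fin k → Fin d → ℝ) (u : Fin k → ℝ) : Fin d → ℝ :=
  ∑ j, u j • ξ j

/-- For a linear subspace `U ⊆ ℝ^k`, the space
`L(U) = {ξ ∈ (ℝ^d)^k : ξ·u = 0 for all u ∈ U^⊥}`. -/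
def LU (d : ℕ) {k : ℕ} (U : Submodule ℝ (Fin k → ℝ)) : Set (Fin k → Fin d → ℝ) :=
  {ξ | ∀ u : Fin k → ℝ, (∀ w ∈ U, dotp u w = 0) → xidot ξ u = 0}

-- ============ auxiliary development ============
namespace Stmt8
variable {d k : ℕ}

abbrev Mtx (d : ℕ) := Matrix (Fin d) (Fin d) ℝ

/-- columnwise matrix action on tuples -/
def mvk (A : Mtx d) (w : Fin k → Fin d → ℝ) : Fin k → Fin d → ℝ := fun j => A.mulVec (w j)

lemma mk_mul (M N : SLd d) (v w : Fin k → Fin d → ℝ) :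
    (⟨M, v⟩ * ⟨N, w⟩ : ASL d k) = ⟨M * N, fun j => v j + (M : Mtx d).mulVec (w j)⟩ := rfl

lemma mk_inv (M : SLd d) (v : Fin k → Fin d → ℝ) :
    (⟨M, v⟩ : ASL d k)⁻¹ = ⟨M⁻¹, fun j => -(((M⁻¹ : SLd d) : Mtx d).mulVec (v j))⟩ := rfl

lemma one_def : (1 : ASL d k) = ⟨1, fun _ => 0⟩ := rfl

lemma coe_inv_mul (M : SLd d) : ((M⁻¹ : SLd d) : Mtx d) * (M : Mtx d) = 1 := by
  rw [← Matrix.SpecialLinearGroup.coe_mul, inv_mul_cancel, Matrix.SpecialLinearGroup.coe_one]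

lemma coe_mul_inv (M : SLd d) : (M : Mtx d) * ((M⁻¹ : SLd d) : Mtx d) = 1 := by
  rw [← Matrix.SpecialLinearGroup.coe_mul, mul_inv_cancel, Matrix.SpecialLinearGroup.coe_one]



def row (i : Fin d) (w : Fin k → Fin d → ℝ) : Fin k → ℝ := fun j => w j i
def rowMat (i : Fin d) (r : Fin k → ℝ) : Fin k → Fin d → ℝ := fun j i' => if i' = i then r j else 0
def tv (i l : Fin d) (h : i ≠ l) (s : ℝ) : SLd d :=
  ⟨Matrix.transvection i l s, Matrix.det_transvection_of_ne i l h s⟩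

lemma transvection_mulVec (i l : Fin d) (s : ℝ) (v : Fin d → ℝ) :
    (Matrix.transvection i l s).mulVec v = v + fun i' => if i' = i then s * v l else 0 := by
  funext i'
  simp only [Matrix.transvection, Matrix.add_mulVec, Matrix.one_mulVec, Pi.add_apply]
  congr 1
  by_cases h' : i' = i
  · subst h'
    simp [Matrix.mulVec, dotProduct, Matrix.single_apply, ite_and]
  · simp [Matrix.mulVec, dotProduct, Matrix.single_apply, ite_and, h', Ne.symm h']

lemma mvk_tv (i l : Fin d) (h : i ≠ l) (s : ℝ) (w : Fin k → Fin d → ℝ) :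
    mvk ((tv i l h s : SLd d) : Mtx d) w
      = w + rowMat i (s • row l w) := by
  funext j i'
  simp only [mvk, tv, transvection_mulVec, rowMat, row, Pi.add_apply, Pi.smul_apply,
    smul_eq_mul]

lemma row_rowMat (i : Fin d) (r : Fin k → ℝ) : row i (rowMat i r) = r := by
  funext j; simp [row, rowMat]

lemma rowMat_add (i : Fin d) (r r' : Fin k → ℝ) :
    rowMat i (r + r') = rowMat i r + rowMat i r' := by
  funext j i'; simp [rowMat]; split <;> simp

lemma rowMat_zero (i : Fin d) : rowMat (k := k) i 0 = 0 := by
  funext j i'; simp [rowMat]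

lemma sum_rowMat (w : Fin k → Fin d → ℝ) : ∑ i, rowMat i (row i w) = w := by
  funext j i'
  rw [Finset.sum_apply, Finset.sum_apply]
  simp [rowMat, row]


variable (H : Subgroup (ASL d k))

/-- the set of pure translations in H -/
def Vset : Set (Fin k → Fin d → ℝ) := {w | (⟨1, w⟩ : ASL d k) ∈ H}

lemma Vset.zero_mem : (0 : Fin k → Fin d → ℝ) ∈ Vset H := by
  have : ((1 : ASL d k)) ∈ H := H.one_mem
  simpa [Vset, one_def, Pi.zero_def] using this

lemma Vset.add_mem {w w' : Fin k → Fin d → ℝ} (h : w ∈ Vset H) (h' : w' ∈ Vset H) :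
    w + w' ∈ Vset H := by
  have := H.mul_mem h h'
  rw [mk_mul] at this
  simpa [Vset, Matrix.SpecialLinearGroup.coe_one, Pi.add_def] using this

lemma Vset.neg_mem {w : Fin k → Fin d → ℝ} (h : w ∈ Vset H) : -w ∈ Vset H := by
  have := H.inv_mem h
  rw [mk_inv] at this
  simpa [Vset, inv_one, Matrix.SpecialLinearGroup.coe_one, Pi.neg_def] using this

lemma Vset.sub_mem {w w' : Fin k → Fin d → ℝ} (h : w ∈ Vset H) (h' : w' ∈ Vset H) :
    w - w' ∈ Vset H := by
  simpa [sub_eq_add_neg] using Vset.add_mem H h (Vset.neg_mem H h')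

/-- V as an additive subgroup -/
def Vgrp : AddSubgroup (Fin k → Fin d → ℝ) where
  carrier := Vset H
  zero_mem' := Vset.zero_mem H
  add_mem' := fun h h' => Vset.add_mem H h h'
  neg_mem' := fun h => Vset.neg_mem H h

variable {H}

lemma Vset.conj (hproj : (fun g : ASL d k => g.M) '' (H : Set (ASL d k)) = Set.univ)
    (M : SLd d) {w : Fin k → Fin d → ℝ} (hw : w ∈ Vset H) : mvk (M : Mtx d) w ∈ Vset H := by
  have : M ∈ (fun g : ASL d k => g.M) '' (H : Set (ASL d k)) := by rw [hproj]; trivial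
  obtain ⟨g, hg, rfl⟩ := this
  have hmem := H.mul_mem (H.mul_mem hg hw) (H.inv_mem hg)
  have heq : (⟨g.M, g.v⟩ : ASL d k) = g := rfl
  have : g * (⟨1, w⟩ : ASL d k) * g⁻¹ = ⟨1, mvk (g.M : Mtx d) w⟩ := by
    rw [← heq, mk_mul, mk_inv, mk_mul]
    ext j i
    · show (((g.M * 1) * g.M⁻¹ : SLd d) : Mtx d) j i = ((1 : SLd d) : Mtx d) j i
      rw [mul_one, mul_inv_cancel]
    · show ((g.v j + (g.M : Mtx d).mulVec (w j))
          + (((g.M * 1 : SLd d)) : Mtx d).mulVec (-(((g.M⁻¹ : SLd d) : Mtx d).mulVec (g.v j)))) i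
        = mvk (g.M : Mtx d) w j i
      rw [mul_one]
      simp only [Matrix.mulVec_neg, Matrix.mulVec_mulVec, coe_mul_inv, Matrix.one_mulVec, mvk]
      ring_nf
      simp [add_comm]
    
  rw [this] at hmem
  exact hmem

end Stmt8
section
open Matrix
namespace Stmt8
variable {d k : ℕ} {H : Subgroup (ASL d k)}

/-- key elementary manipulation: V contains all single-row scalings of rows of its elements -/
lemma rowMat_mem (hd : 2 ≤ d) (hproj : (fun g : ASL d k => g.M) '' (H : Set (ASL d k)) = Set.univ)
    {w : Fin k → Fin d → ℝ} (hw : w ∈ Vset H) (l i : Fin d) (s : ℝ) :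
    rowMat i (s • row l w) ∈ Vset H := by
  have key : ∀ (i' : Fin d), i' ≠ l → rowMat i' (s • row l w) ∈ Vset H := by
    intro i' hil
    have h1 := Vset.conj hproj (tv i' l hil s) hw
    rw [mvk_tv] at h1
    have := Vset.sub_mem H h1 hw
    simpa using this
  by_cases hil : i ≠ l
  · exact key i hil
  · push_neg at hil
    subst hil
    -- pick i' ≠ i
    obtain ⟨i', hi'⟩ : ∃ i' : Fin d, i' ≠ i := by
      rcases eq_or_ne i ⟨0, by omega⟩ with h0 | h0
      · exact ⟨⟨1, by omega⟩, by rw [h0]; simp [Fin.ext_iff]⟩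
      · exact ⟨⟨0, by omega⟩, fun h => h0 h.symm⟩
    have h1 := key i' hi'
    have h2 := Vset.conj hproj (tv i i' (Ne.symm hi') 1) h1
    rw [mvk_tv] at h2
    have h3 := Vset.sub_mem H h2 h1
    rw [add_sub_cancel_left, row_rowMat, one_smul] at h3
    exact h3

variable (H) in
/-- the row space U -/
def Usub : Submodule ℝ (Fin k → ℝ) :=
  Submodule.span ℝ {r | ∃ w ∈ Vset H, ∃ l : Fin d, r = row l w}

lemma row_mem_Usub {w : Fin k → Fin d → ℝ} (hw : w ∈ Vset H) (i : Fin d) :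
    row i w ∈ Usub H :=
  Submodule.subset_span ⟨w, hw, i, rfl⟩

lemma mem_V_of_rows (hd : 2 ≤ d)
    (hproj : (fun g : ASL d k => g.M) '' (H : Set (ASL d k)) = Set.univ)
    {w : Fin k → Fin d → ℝ} (hrows : ∀ i, row i w ∈ Usub H) : w ∈ Vset H := by
  -- the set of rows r with rowMat i r ∈ V is a submodule containing the generators
  have hSi : ∀ i : Fin d, ∃ S : Submodule ℝ (Fin k → ℝ),
      (S : Set (Fin k → ℝ)) = {r | rowMat i r ∈ Vset H} := by
    intro i
    refine ⟨{ carrier := {r | rowMat i r ∈ Vset H}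
              add_mem' := ?_
              zero_mem' := ?_
              smul_mem' := ?_ }, rfl⟩
    · intro r r' hr hr'
      have := Vset.add_mem H hr hr'
      rwa [← rowMat_add] at this
    · rw [Set.mem_setOf_eq, rowMat_zero]; exact Vset.zero_mem H
    · intro c r hr
      have := rowMat_mem hd hproj hr i i c
      rwa [row_rowMat] at this
  have hall : ∀ i : Fin d, rowMat i (row i w) ∈ Vset H := by
    intro i
    obtain ⟨S, hS⟩ := hSi i
    have hgen : {r | ∃ w ∈ Vset H, ∃ l : Fin d, r = row l w} ⊆ (S : Set (Fin k → ℝ)) := by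
      rintro r ⟨w', hw', l, rfl⟩
      rw [hS]
      have := rowMat_mem hd hproj hw' l i 1
      rwa [one_smul] at this
    have hmem : row i w ∈ S := Submodule.span_le.mpr hgen (hrows i)
    rw [← SetLike.mem_coe, hS] at hmem
    exact hmem
  have : ∑ i, rowMat i (row i w) ∈ Vset H := by
    have : ∀ i ∈ (Finset.univ : Finset (Fin d)), rowMat i (row i w) ∈ Vgrp H :=
      fun i _ => hall i
    exact AddSubgroup.sum_mem (Vgrp H) this
  rwa [sum_rowMat] at this

end Stmt8
end
section
open Matrix

namespace Stmt8
variable {d k : ℕ}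

lemma double_perp (U : Submodule ℝ (Fin k → ℝ)) (r : Fin k → ℝ)
    (h : ∀ u : Fin k → ℝ, (∀ w ∈ U, dotp u w = 0) → dotp u r = 0) : r ∈ U := by
  set e : (Fin k → ℝ) ≃ₗ[ℝ] EuclideanSpace ℝ (Fin k) :=
    (WithLp.linearEquiv 2 ℝ (Fin k → ℝ)).symm with he
  have hinner : ∀ a b : Fin k → ℝ, (inner ℝ (e a) (e b) : ℝ) = dotp a b := by
    intro a b
    rw [PiLp.inner_apply]
    simp [dotp, he, RCLike.inner_apply, mul_comm]
  set U' : Submodule ℝ (EuclideanSpace ℝ (Fin k)) := U.map e.toLinearMap with hU'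
  have hmem : e r ∈ U'ᗮᗮ := by
    rw [Submodule.mem_orthogonal]
    intro u hu
    rw [Submodule.mem_orthogonal] at hu
    have hu0 : ∀ w ∈ U, dotp (e.symm u) w = 0 := by
      intro w hw
      have h1 : (inner ℝ (e (e.symm u)) (e w) : ℝ) = 0 := by
        rw [e.apply_symm_apply]
        rw [real_inner_comm]
        exact hu (e w) (Submodule.mem_map_of_mem hw)
      rw [hinner] at h1
      exact h1
    have := h _ hu0
    rw [← hinner, e.apply_symm_apply] at this
    exact this
  rw [Submodule.orthogonal_orthogonal] at hmem
  obtain ⟨x, hx, hxr⟩ := hmem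
  have : x = r := e.injective hxr
  rwa [← this]

lemma xidot_apply (ξ : Fin k → Fin d → ℝ) (u : Fin k → ℝ) (i : Fin d) :
    xidot ξ u i = dotp u (row i ξ) := by
  simp [xidot, dotp, row, Finset.sum_apply]

lemma LU_eq_rows (U : Submodule ℝ (Fin k → ℝ)) :
    LU d U = {ξ : Fin k → Fin d → ℝ | ∀ i, row i ξ ∈ U} := by
  ext ξ
  constructor
  · intro hξ i
    apply double_perp
    intro u hu
    have h1 := hξ u hu
    have := congrFun h1 i
    rw [xidot_apply] at this
    simpa using this
  · intro hξ u hu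
    funext i
    rw [xidot_apply]
    simpa using hu _ (hξ i)
end Stmt8
end
section
open Matrix
namespace Stmt8
variable {d k : ℕ} {H : Subgroup (ASL d k)}

lemma exists_lift (hproj : (fun g : ASL d k => g.M) '' (H : Set (ASL d k)) = Set.univ)
    (M : SLd d) : ∃ g : ASL d k, g ∈ H ∧ g.M = M := by
  have : M ∈ (fun g : ASL d k => g.M) '' (H : Set (ASL d k)) := by rw [hproj]; trivial
  simpa [Set.mem_image] using this

variable (hproj : (fun g : ASL d k => g.M) '' (H : Set (ASL d k)) = Set.univ)
variable {W : Submodule ℝ (Fin k → ℝ)} (hW : IsCompl (Usub H) W)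

/-- a choice of lift -/
def wch (hproj : (fun g : ASL d k => g.M) '' (H : Set (ASL d k)) = Set.univ)
    (M : SLd d) : Fin k → Fin d → ℝ := (exists_lift hproj M).choose.v

lemma wch_mem (M : SLd d) : (⟨M, wch hproj M⟩ : ASL d k) ∈ H := by
  obtain ⟨hg, hM⟩ := (exists_lift hproj M).choose_spec
  have heq : (⟨M, wch hproj M⟩ : ASL d k) = (exists_lift hproj M).choose := by
    ext j i
    · rw [hM]
    · rfl
  rw [heq]
  exact hg

/-- rowwise projection onto W along U -/
def Pk (hW : IsCompl (Usub H) W) (w : Fin k → Fin d → ℝ) : Fin k → Fin d → ℝ :=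
  fun j i => ((W.linearProjOfIsCompl (Usub H) hW.symm) (row i w) : Fin k → ℝ) j

lemma row_Pk (w : Fin k → Fin d → ℝ) (i : Fin d) :
    row i (Pk hW w) = ((W.linearProjOfIsCompl (Usub H) hW.symm) (row i w) : Fin k → ℝ) := rfl

lemma row_Pk_mem (w : Fin k → Fin d → ℝ) (i : Fin d) : row i (Pk hW w) ∈ W := by
  rw [row_Pk]; exact ((W.linearProjOfIsCompl (Usub H) hW.symm) (row i w)).2

lemma row_sub (w w' : Fin k → Fin d → ℝ) (i : Fin d) :
    row i (w - w') = row i w - row i w' := rfl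

lemma row_add (w w' : Fin k → Fin d → ℝ) (i : Fin d) :
    row i (w + w') = row i w + row i w' := rfl

lemma sub_Pk_row_mem (w : Fin k → Fin d → ℝ) (i : Fin d) :
    row i (w - Pk hW w) ∈ Usub H := by
  rw [row_sub, row_Pk]
  have h := Submodule.projection_add_projection_eq_self hW (row i w)
  have : row i w - ((W.linearProjOfIsCompl (Usub H) hW.symm) (row i w) : Fin k → ℝ)
      = (((Usub H).linearProjOfIsCompl W hW) (row i w) : Fin k → ℝ) := by
    rw [sub_eq_iff_eq_add]; exact h.symm
  rw [this]
  exact (((Usub H).linearProjOfIsCompl W hW) (row i w)).2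

/-- the cocycle -/
def psi (hproj : (fun g : ASL d k => g.M) '' (H : Set (ASL d k)) = Set.univ)
    (hW : IsCompl (Usub H) W) (M : SLd d) : Fin k → Fin d → ℝ :=
  Pk hW (wch hproj M)

lemma psi_row_mem (M : SLd d) (i : Fin d) : row i (psi hproj hW M) ∈ W :=
  row_Pk_mem hW _ i

lemma psi_mem (hd : 2 ≤ d) (M : SLd d) : (⟨M, psi hproj hW M⟩ : ASL d k) ∈ H := by
  have h1 : psi hproj hW M - wch hproj M ∈ Vset H := by
    apply mem_V_of_rows hd hproj
    intro i
    have := sub_Pk_row_mem hW (wch hproj M) i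
    have heq : row i (psi hproj hW M - wch hproj M) = -row i (wch hproj M - Pk hW (wch hproj M)) := by
      rw [row_sub, row_sub, psi]; abel
    rw [heq]
    exact Submodule.neg_mem _ this
  have h2 := H.mul_mem h1 (wch_mem hproj M)
  rw [mk_mul] at h2
  have h3 : (⟨1 * M, fun j => (psi hproj hW M - wch hproj M) j
      + ((1 : SLd d) : Mtx d).mulVec (wch hproj M j)⟩ : ASL d k) = ⟨M, psi hproj hW M⟩ := by
    ext j i
    · rw [one_mul]
    · show ((psi hproj hW M - wch hproj M) j + ((1 : SLd d) : Mtx d).mulVec (wch hproj M j)) i = _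
      simp [Matrix.SpecialLinearGroup.coe_one]
  rwa [h3] at h2

lemma hdiff (hd : 2 ≤ d) {M : SLd d} {w : Fin k → Fin d → ℝ}
    (hmem : (⟨M, w⟩ : ASL d k) ∈ H) : w - psi hproj hW M ∈ Vset H := by
  have h1 := H.mul_mem (H.inv_mem (psi_mem hproj hW hd M)) hmem
  rw [mk_inv, mk_mul] at h1
  have h2 : (⟨M⁻¹ * M, fun j => -(((M⁻¹ : SLd d) : Mtx d).mulVec (psi hproj hW M j))
      + ((M⁻¹ : SLd d) : Mtx d).mulVec (w j)⟩ : ASL d k)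
      = ⟨1, mvk ((M⁻¹ : SLd d) : Mtx d) (w - psi hproj hW M)⟩ := by
    ext j i
    · rw [inv_mul_cancel]
    · show (-(((M⁻¹ : SLd d) : Mtx d).mulVec (psi hproj hW M j))
          + ((M⁻¹ : SLd d) : Mtx d).mulVec (w j)) i = _
      simp [mvk, Pi.sub_apply, Matrix.mulVec_sub]
      ring
  rw [h2] at h1
  have h3 := Vset.conj hproj M h1
  have h4 : mvk (M : Mtx d) (mvk ((M⁻¹ : SLd d) : Mtx d) (w - psi hproj hW M))
      = w - psi hproj hW M := by
    funext j
    show (M : Mtx d).mulVec (((M⁻¹ : SLd d) : Mtx d).mulVec ((w - psi hproj hW M) j))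
      = (w - psi hproj hW M) j
    rw [Matrix.mulVec_mulVec, coe_mul_inv, Matrix.one_mulVec]
  rwa [h4] at h3

lemma psi_uniq (hd : 2 ≤ d) {M : SLd d} {w : Fin k → Fin d → ℝ}
    (hmem : (⟨M, w⟩ : ASL d k) ∈ H) (hrows : ∀ i, row i w ∈ W) : w = psi hproj hW M := by
  have h1 := hdiff hproj hW hd hmem
  have h2 : ∀ i, row i (w - psi hproj hW M) ∈ Usub H := fun i =>
    row_mem_Usub h1 i
  have h3 : ∀ i, row i (w - psi hproj hW M) ∈ W := by
    intro i
    rw [row_sub]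
    exact Submodule.sub_mem _ (hrows i) (psi_row_mem hproj hW M i)
  have h4 : ∀ i, row i (w - psi hproj hW M) = 0 := fun i =>
    Submodule.disjoint_def.mp hW.disjoint _ (h2 i) (h3 i)
  funext j i
  have := congrFun (h4 i) j
  simp only [row, Pi.sub_apply, Pi.zero_apply] at this ⊢
  linarith

lemma row_mvk (A : Mtx d) (w : Fin k → Fin d → ℝ) (i : Fin d) :
    row i (mvk A w) = ∑ l, A i l • row l w := by
  funext j
  rw [Finset.sum_apply]
  simp [row, mvk, Matrix.mulVec, dotProduct]

lemma psi_cocycle (hd : 2 ≤ d) (M N : SLd d) :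
    psi hproj hW (M * N) = psi hproj hW M + mvk (M : Mtx d) (psi hproj hW N) := by
  have h1 := H.mul_mem (psi_mem hproj hW hd M) (psi_mem hproj hW hd N)
  rw [mk_mul] at h1
  refine (psi_uniq hproj hW hd h1 ?_).symm
  intro i
  rw [show (fun j => psi hproj hW M j + (M : Mtx d).mulVec (psi hproj hW N j))
      = psi hproj hW M + mvk (M : Mtx d) (psi hproj hW N) from rfl]
  rw [row_add, row_mvk]
  exact Submodule.add_mem _ (psi_row_mem hproj hW M i)
    (Submodule.sum_mem _ fun l _ => Submodule.smul_mem _ _ (psi_row_mem hproj hW N l))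

lemma psi_eq_zero_of_mem (hd : 2 ≤ d) {M : SLd d}
    (hmem : (⟨M, (0 : Fin k → Fin d → ℝ)⟩ : ASL d k) ∈ H) : psi hproj hW M = 0 := by
  refine (psi_uniq hproj hW hd hmem ?_).symm
  intro i
  have : row i (0 : Fin k → Fin d → ℝ) = 0 := rfl
  rw [this]
  exact Submodule.zero_mem _

end Stmt8
end
section
open Matrix
namespace Stmt8
variable {d k : ℕ} {H : Subgroup (ASL d k)}
variable (hproj : (fun g : ASL d k => g.M) '' (H : Set (ASL d k)) = Set.univ)
variable {W : Submodule ℝ (Fin k → ℝ)} (hW : IsCompl (Usub H) W)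

lemma commute_inv_left {A B : Mtx d} (h : A * B = B * A) (hA : IsUnit A.det) :
    A⁻¹ * B = B * A⁻¹ := by
  have h2 : A⁻¹ * (A * B) * A⁻¹ = A⁻¹ * (B * A) * A⁻¹ := by rw [h]
  rw [← mul_assoc A⁻¹ A B, Matrix.nonsing_inv_mul A hA, one_mul] at h2
  rw [mul_assoc A⁻¹ (B * A) A⁻¹, mul_assoc B A A⁻¹, Matrix.mul_nonsing_inv A hA, mul_one] at h2
  exact h2.symm

lemma one_sub_commute {A B : Mtx d} (h : A * B = B * A) :
    (1 - A) * (1 - B) = (1 - B) * (1 - A) := by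
  have e1 : ((1 : Mtx d) - A) * (1 - B) = 1 - A - B + A * B := by noncomm_ring
  have e2 : ((1 : Mtx d) - B) * (1 - A) = 1 - B - A + B * A := by noncomm_ring
  rw [e1, e2, h]
  abel

def xiA (hproj : (fun g : ASL d k => g.M) '' (H : Set (ASL d k)) = Set.univ)
    (hW : IsCompl (Usub H) W) (A : SLd d) : Fin k → Fin d → ℝ :=
  fun j => (1 - (A : Mtx d))⁻¹.mulVec (psi hproj hW A j)

lemma psi_commute (hd : 2 ≤ d) {A M : SLd d} (hcomm : (A : Mtx d) * M = M * A)
    (hdet : IsUnit ((1 : Mtx d) - A).det) (j : Fin k) :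
    psi hproj hW M j = ((1 : Mtx d) - M).mulVec (xiA hproj hW A j) := by
  have hSL : M * A = A * M := Subtype.ext (by
    rw [Matrix.SpecialLinearGroup.coe_mul, Matrix.SpecialLinearGroup.coe_mul]
    exact hcomm.symm)
  have h1 := psi_cocycle hproj hW hd A M
  have h2 := psi_cocycle hproj hW hd M A
  rw [← hSL] at h1
  rw [h1] at h2
  -- h2 : psi A + mvk A (psi M) = psi M + mvk M (psi A)
  have h3 : ((1 : Mtx d) - A).mulVec (psi hproj hW M j)
      = ((1 : Mtx d) - M).mulVec (psi hproj hW A j) := by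
    have h5 : psi hproj hW A j + (A : Mtx d).mulVec (psi hproj hW M j)
        = psi hproj hW M j + (M : Mtx d).mulVec (psi hproj hW A j) := by
      have := congrFun h2 j
      simpa [mvk] using this
    rw [Matrix.sub_mulVec, Matrix.sub_mulVec, Matrix.one_mulVec, Matrix.one_mulVec,
      sub_eq_sub_iff_add_eq_add]
    exact h5.symm
  have hcomm2 : ((1 : Mtx d) - A)⁻¹ * ((1 : Mtx d) - M)
      = ((1 : Mtx d) - M) * ((1 : Mtx d) - A)⁻¹ :=
    commute_inv_left (one_sub_commute hcomm) hdet
  calc psi hproj hW M j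
      = (((1 : Mtx d) - A)⁻¹ * ((1 : Mtx d) - A)).mulVec (psi hproj hW M j) := by
        rw [Matrix.nonsing_inv_mul _ hdet, Matrix.one_mulVec]
    _ = ((1 : Mtx d) - A)⁻¹.mulVec (((1 : Mtx d) - A).mulVec (psi hproj hW M j)) := by
        rw [Matrix.mulVec_mulVec]
    _ = ((1 : Mtx d) - A)⁻¹.mulVec (((1 : Mtx d) - M).mulVec (psi hproj hW A j)) := by rw [h3]
    _ = (((1 : Mtx d) - A)⁻¹ * ((1 : Mtx d) - M)).mulVec (psi hproj hW A j) := by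
        rw [Matrix.mulVec_mulVec]
    _ = (((1 : Mtx d) - M) * ((1 : Mtx d) - A)⁻¹).mulVec (psi hproj hW A j) := by rw [hcomm2]
    _ = ((1 : Mtx d) - M).mulVec (xiA hproj hW A j) := by
        rw [← Matrix.mulVec_mulVec]
        rfl

lemma xiA_eq (hd : 2 ≤ d) {A B : SLd d} (hAB : (A : Mtx d) * B = B * A)
    (hA : IsUnit ((1 : Mtx d) - A).det) (hB : IsUnit ((1 : Mtx d) - B).det) :
    xiA hproj hW B = xiA hproj hW A := by
  funext j
  have h1 := psi_commute hproj hW hd hAB hA j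
  show ((1 : Mtx d) - (B : Mtx d))⁻¹.mulVec (psi hproj hW B j) = xiA hproj hW A j
  rw [h1, Matrix.mulVec_mulVec, Matrix.nonsing_inv_mul _ hB, Matrix.one_mulVec]

/-- the subgroup where the cocycle equals the coboundary of ξ -/
def Zs (hd : 2 ≤ d) (ξ : Fin k → Fin d → ℝ) : Subgroup (SLd d) where
  carrier := {M | ∀ j, psi hproj hW M j = ((1 : Mtx d) - M).mulVec (ξ j)}
  one_mem' := by
    intro j
    have h1 : psi hproj hW 1 = 0 :=
      psi_eq_zero_of_mem hproj hW hd (show (⟨1, 0⟩ : ASL d k) ∈ H from H.one_mem)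
    rw [h1]
    simp [Matrix.SpecialLinearGroup.coe_one]
  mul_mem' := by
    intro M N hM hN j
    rw [psi_cocycle hproj hW hd M N]
    show psi hproj hW M j + (M : Mtx d).mulVec (psi hproj hW N j) = _
    rw [hM j, hN j, Matrix.SpecialLinearGroup.coe_mul]
    simp only [Matrix.sub_mulVec, Matrix.one_mulVec, Matrix.mulVec_sub, Matrix.mulVec_mulVec]
    abel
  inv_mem' := by
    intro M hM j
    have h1 := psi_cocycle hproj hW hd M⁻¹ M
    rw [inv_mul_cancel] at h1
    have h0 : psi hproj hW 1 = 0 :=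
      psi_eq_zero_of_mem hproj hW hd (show (⟨1, 0⟩ : ASL d k) ∈ H from H.one_mem)
    rw [h0] at h1
    have h2 : psi hproj hW M⁻¹ j = -(((M⁻¹ : SLd d) : Mtx d).mulVec (psi hproj hW M j)) := by
      have := congrFun h1 j
      simp only [Pi.zero_apply, Pi.add_apply, mvk] at this
      exact eq_neg_of_add_eq_zero_left this.symm
    rw [h2, hM j]
    simp only [Matrix.sub_mulVec, Matrix.one_mulVec, Matrix.mulVec_sub, Matrix.mulVec_mulVec,
      coe_inv_mul]
    abel

end Stmt8
end
section
open Matrix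
namespace Stmt8
variable {d k : ℕ} {H : Subgroup (ASL d k)}
variable (hproj : (fun g : ASL d k => g.M) '' (H : Set (ASL d k)) = Set.univ)
variable {W : Submodule ℝ (Fin k → ℝ)} (hW : IsCompl (Usub H) W)

lemma diagonal_transvection_comm (f : Fin d → ℝ) {i j : Fin d} (c : ℝ) (hf : f i = f j) :
    diagonal f * Matrix.transvection i j c = Matrix.transvection i j c * diagonal f := by
  ext a b
  rw [Matrix.diagonal_mul, Matrix.mul_diagonal]
  simp only [Matrix.transvection, Matrix.add_apply, Matrix.one_apply, Matrix.single_apply,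
    Matrix.of_apply]
  rw [mul_add, add_mul]
  congr 1
  · by_cases h : a = b <;> simp [h, mul_comm]
  · by_cases h : i = a ∧ j = b
    · rw [if_pos h]
      obtain ⟨rfl, rfl⟩ := h
      rw [hf]; ring
    · rw [if_neg h]; ring

/-- the diagonal SL matrix with 2 everywhere except (2^(d-1))⁻¹ at slot l -/
def adfun (d : ℕ) (l : Fin d) : Fin d → ℝ := fun i => if i = l then ((2:ℝ)^(d-1))⁻¹ else 2

lemma det_adfun (hd : 2 ≤ d) (l : Fin d) : (diagonal (adfun d l)).det = 1 := by
  rw [Matrix.det_diagonal]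
  unfold adfun
  rw [Finset.prod_ite]
  have h1 : (Finset.univ.filter fun i : Fin d => i = l) = {l} := by
    ext i; simp
  have h2 : (Finset.univ.filter fun i : Fin d => ¬i = l).card = d - 1 := by
    have := Finset.card_filter_add_card_filter_not
      (s := (Finset.univ : Finset (Fin d))) (p := fun i : Fin d => i = l)
    simp [h1] at this
    omega
  rw [h1]
  simp only [Finset.prod_const, Finset.card_singleton, pow_one]
  rw [h2, inv_mul_cancel₀ (by positivity)]

def Adl (hd : 2 ≤ d) (l : Fin d) : SLd d := ⟨diagonal (adfun d l), det_adfun hd l⟩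

lemma det_diag_unit {f : Fin d → ℝ} (hf : ∀ i, f i ≠ 0) : IsUnit (diagonal f).det := by
  rw [Matrix.det_diagonal, isUnit_iff_ne_zero, Finset.prod_ne_zero_iff]
  exact fun i _ => hf i

lemma det_one_sub_diag_unit {f : Fin d → ℝ} (hf : ∀ i, f i ≠ 1) :
    IsUnit ((1 : Mtx d) - diagonal f).det := by
  have h1 : (1 : Mtx d) - diagonal f = diagonal (fun i => 1 - f i) := by
    rw [← Matrix.diagonal_one, Matrix.diagonal_sub]
  rw [h1]
  exact det_diag_unit fun i => sub_ne_zero.mpr (Ne.symm (hf i))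

lemma adfun_ne_one (hd : 2 ≤ d) (l : Fin d) (i : Fin d) : adfun d l i ≠ 1 := by
  unfold adfun
  split
  · have h3 : (2:ℝ)^1 ≤ 2^(d-1) := by
      apply pow_le_pow_right₀ (by norm_num)
      omega
    norm_num at h3
    intro h
    rw [inv_eq_one] at h
    linarith
  · norm_num

lemma det_one_sub_Adl (hd : 2 ≤ d) (l : Fin d) :
    IsUnit ((1 : Mtx d) - ((Adl hd l : SLd d) : Mtx d)).det :=
  det_one_sub_diag_unit (adfun_ne_one hd l)

/-- the canonical coboundary vector -/
def xif (hproj : (fun g : ASL d k => g.M) '' (H : Set (ASL d k)) = Set.univ)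
    (hW : IsCompl (Usub H) W) (hd : 2 ≤ d) : Fin k → Fin d → ℝ :=
  xiA hproj hW (Adl hd ⟨0, by omega⟩)

/-- general membership criterion via a commuting element -/
lemma mem_Zs_of_commutes (hd : 2 ≤ d) {M C : SLd d}
    (h1 : (C : Mtx d) * M = (M : Mtx d) * C)
    (h2 : IsUnit ((1 : Mtx d) - (C : Mtx d)).det)
    (h3 : ((Adl hd ⟨0, by omega⟩ : SLd d) : Mtx d) * C = (C : Mtx d) * (Adl hd ⟨0, by omega⟩ : SLd d)) :
    M ∈ Zs hproj hW hd (xif hproj hW hd) := by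
  intro j
  rw [psi_commute hproj hW hd h1 h2 j,
    show xiA hproj hW C = xif hproj hW hd from
      xiA_eq hproj hW hd h3 (det_one_sub_Adl hd ⟨0, by omega⟩) h2]

lemma diag_comm_Adl (hd : 2 ≤ d) (f : Fin d → ℝ) (l : Fin d) :
    ((Adl hd l : SLd d) : Mtx d) * diagonal f = diagonal f * ((Adl hd l : SLd d) : Mtx d) := by
  show diagonal _ * diagonal _ = diagonal _ * diagonal _
  rw [Matrix.diagonal_mul_diagonal, Matrix.diagonal_mul_diagonal,
    show (fun i => adfun d l i * f i) = (fun i => f i * adfun d l i) from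
      funext fun i => mul_comm _ _]

/-- diagonal det-one matrices lie in Zs -/
lemma diag_mem_Zs (hd : 2 ≤ d) {f : Fin d → ℝ} (hdet : (diagonal f).det = 1) :
    (⟨diagonal f, hdet⟩ : SLd d) ∈ Zs hproj hW hd (xif hproj hW hd) :=
  mem_Zs_of_commutes hproj hW hd
    (diag_comm_Adl hd f ⟨0, by omega⟩)
    (det_one_sub_Adl hd ⟨0, by omega⟩)
    rfl

/-- transvections lie in Zs -/
lemma tv_mem_Zs (hd : 2 ≤ d) {i l : Fin d} (hil : i ≠ l) (s : ℝ) :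
    tv i l hil s ∈ Zs hproj hW hd (xif hproj hW hd) := by
  rcases Nat.lt_or_ge d 3 with hd2 | hd3
  · -- d = 2 : use -1, which is central
    have hd2' : d = 2 := by omega
    have hdet : ((-1 : Mtx d)).det = 1 := by
      rw [Matrix.det_neg, Matrix.det_one, Fintype.card_fin, hd2']
      norm_num
    refine mem_Zs_of_commutes hproj hW hd (C := ⟨-1, hdet⟩) ?_ ?_ ?_
    · show (-1 : Mtx d) * _ = _ * (-1 : Mtx d)
      rw [neg_one_mul, mul_neg_one]
    · show IsUnit ((1 : Mtx d) - (-1)).det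
      have heq : (1 : Mtx d) - (-1) = diagonal (fun _ => (2:ℝ)) := by
        ext a b
        by_cases h : a = b <;>
          simp [Matrix.one_apply, Matrix.diagonal_apply, h, Matrix.sub_apply]
        norm_num
      rw [heq]
      exact det_diag_unit fun i => by norm_num
    · show _ * (-1 : Mtx d) = (-1 : Mtx d) * _
      rw [neg_one_mul, mul_neg_one]
  · -- d ≥ 3 : pick m ∉ {i, l}
    obtain ⟨m, hmi, hml⟩ : ∃ m : Fin d, m ≠ i ∧ m ≠ l := by
      by_contra hc
      push_neg at hc
      have hsub : (Finset.univ : Finset (Fin d)) ⊆ {i, l} := by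
        intro m _
        rcases eq_or_ne m i with h | h
        · simp [h]
        · simp [hc m h]
      have hle := Finset.card_le_card hsub
      have hcard : ({i, l} : Finset (Fin d)).card ≤ 2 :=
        (Finset.card_insert_le _ _).trans (by simp)
      rw [Finset.card_univ, Fintype.card_fin] at hle
      omega
    refine mem_Zs_of_commutes hproj hW hd (C := Adl hd m) ?_ (det_one_sub_Adl hd m) ?_
    · show diagonal _ * Matrix.transvection i l s = Matrix.transvection i l s * diagonal _
      exact diagonal_transvection_comm _ s (by
        unfold adfun
        rw [if_neg (fun h => hmi h.symm), if_neg (fun h => hml h.symm)])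
    · exact diag_comm_Adl hd (adfun d m) ⟨0, by omega⟩

end Stmt8
end
section
open Matrix
namespace Stmt8
variable {d k : ℕ} {H : Subgroup (ASL d k)}
variable (hproj : (fun g : ASL d k => g.M) '' (H : Set (ASL d k)) = Set.univ)
variable {W : Submodule ℝ (Fin k → ℝ)} (hW : IsCompl (Usub H) W)

def mkSL (A : Mtx d) (h : A.det = 1) : SLd d := ⟨A, h⟩

@[simp] lemma mkSL_coe (A : Mtx d) (h : A.det = 1) : ((mkSL A h : SLd d) : Mtx d) = A := rfl

lemma det_transvec_list (L : List (TransvectionStruct (Fin d) ℝ)) :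
    ((L.map TransvectionStruct.toMatrix).prod).det = 1 := by
  induction L with
  | nil => simp
  | cons t L ih =>
    rw [List.map_cons, List.prod_cons, Matrix.det_mul, ih,
      Matrix.TransvectionStruct.det, one_mul]

lemma transvec_list_mem_Zs (hd : 2 ≤ d) (L : List (TransvectionStruct (Fin d) ℝ)) :
    (mkSL (L.map TransvectionStruct.toMatrix).prod (det_transvec_list L))
      ∈ Zs hproj hW hd (xif hproj hW hd) := by
  induction L with
  | nil =>
    have : (mkSL (List.map TransvectionStruct.toMatrix ([] : List (TransvectionStruct (Fin d) ℝ))).prod (det_transvec_list [])) = 1 :=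
      Subtype.ext (by simp [mkSL, Matrix.SpecialLinearGroup.coe_one])
    rw [this]
    exact (Zs hproj hW hd (xif hproj hW hd)).one_mem
  | cons t L ih =>
    have heq : (mkSL (List.map TransvectionStruct.toMatrix (t :: L)).prod
          (det_transvec_list (t :: L)))
        = (mkSL t.toMatrix (Matrix.TransvectionStruct.det t))
          * mkSL (L.map TransvectionStruct.toMatrix).prod (det_transvec_list L) := by
      apply Subtype.ext
      rw [Matrix.SpecialLinearGroup.coe_mul]
      simp [List.prod_cons]
    rw [heq]
    refine Subgroup.mul_mem _ ?_ ih
    obtain ⟨ti, tj, hij, tc⟩ := t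
    have htv : (mkSL (Matrix.TransvectionStruct.toMatrix ⟨ti, tj, hij, tc⟩)
        (Matrix.TransvectionStruct.det _)) = tv ti tj hij tc := by
      apply Subtype.ext
      rfl
    rw [htv]
    exact tv_mem_Zs hproj hW hd hij tc

lemma all_mem_Zs (hd : 2 ≤ d) (M : SLd d) :
    M ∈ Zs hproj hW hd (xif hproj hW hd) := by
  obtain ⟨L, L', D, hM⟩ :=
    Matrix.Pivot.exists_list_transvec_mul_diagonal_mul_list_transvec (M : Mtx d)
  have hdP := det_transvec_list (d := d) L
  have hdQ := det_transvec_list (d := d) L'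
  have hdD : (diagonal D).det = 1 := by
    have h1 := congrArg Matrix.det hM
    rw [Matrix.det_mul, Matrix.det_mul, hdP, hdQ, M.2, one_mul, mul_one] at h1
    exact h1.symm
  have hMeq : M = (mkSL (L.map TransvectionStruct.toMatrix).prod hdP)
      * mkSL (diagonal D) hdD * mkSL (L'.map TransvectionStruct.toMatrix).prod hdQ := by
    apply Subtype.ext
    rw [Matrix.SpecialLinearGroup.coe_mul, Matrix.SpecialLinearGroup.coe_mul]
    exact hM
  rw [hMeq]
  exact Subgroup.mul_mem _
    (Subgroup.mul_mem _ (transvec_list_mem_Zs hproj hW hd L) (diag_mem_Zs hproj hW hd hdD))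
    (transvec_list_mem_Zs hproj hW hd L')

/-- The main coboundary identity. -/
lemma psi_coboundary (hd : 2 ≤ d) (M : SLd d) (j : Fin k) :
    psi hproj hW M j = ((1 : Mtx d) - M).mulVec (xif hproj hW hd j) :=
  all_mem_Zs hproj hW hd M j

end Stmt8
end

section
open Matrix
namespace Stmt8
variable {d k : ℕ} {H : Subgroup (ASL d k)}
variable (hproj : (fun g : ASL d k => g.M) '' (H : Set (ASL d k)) = Set.univ)
variable {W : Submodule ℝ (Fin k → ℝ)} (hW : IsCompl (Usub H) W)

include hproj in
lemma Vset_eq_LU (hd : 2 ≤ d) : Vset H = LU d (Usub H) := by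
  rw [LU_eq_rows]
  ext w
  exact ⟨fun h i => row_mem_Usub h i, fun h => mem_V_of_rows hd hproj h⟩

lemma nmat_entry (hd : 2 ≤ d) (x : Fin (d-1) → ℝ) (l : Fin d) :
    ((nmat d x : SLd d) : Mtx d) ⟨1, by omega⟩ l
      = (if l = ⟨0, by omega⟩ then x ⟨0, by omega⟩ else 0)
        + (if l = ⟨1, by omega⟩ then 1 else 0) := by
  show (Matrix.of _ : Mtx d) _ _ = _
  rw [Matrix.of_apply]
  by_cases h0 : (l : ℕ) = 0
  · have hl : l = ⟨0, by omega⟩ := Fin.ext h0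
    have hl1 : l ≠ ⟨1, by omega⟩ := by simp [Fin.ext_iff]; omega
    rw [if_pos h0, dif_neg (by simp : ¬((⟨1, by omega⟩ : Fin d) : ℕ) = 0),
      if_pos hl, if_neg hl1, add_zero]
    rfl
  · have hl0 : l ≠ ⟨0, by omega⟩ := by simp [Fin.ext_iff]; omega
    rw [if_neg h0, if_neg hl0, zero_add]
    by_cases h1 : l = ⟨1, by omega⟩
    · rw [if_pos h1.symm, if_pos h1]
    · rw [if_neg (fun h => h1 h.symm), if_neg h1]

lemma mulVec_nmat_one (hd : 2 ≤ d) (x : Fin (d-1) → ℝ) (v : Fin d → ℝ) :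
    ((nmat d x : SLd d) : Mtx d).mulVec v ⟨1, by omega⟩
      = x ⟨0, by omega⟩ * v ⟨0, by omega⟩ + v ⟨1, by omega⟩ := by
  have hterm : ∀ l : Fin d, ((nmat d x : SLd d) : Mtx d) ⟨1, by omega⟩ l * v l
      = (if l = (⟨0, by omega⟩ : Fin d) then x ⟨0, by omega⟩ * v ⟨0, by omega⟩ else 0)
        + (if l = (⟨1, by omega⟩ : Fin d) then v ⟨1, by omega⟩ else 0) := by
    intro l
    rw [nmat_entry hd]
    by_cases h0 : l = ⟨0, by omega⟩
    · subst h0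
      have h01 : ((⟨0, by omega⟩ : Fin d)) ≠ (⟨1, by omega⟩ : Fin d) := by
        simp [Fin.ext_iff]
      rw [if_pos rfl, if_pos rfl, if_neg h01, if_neg h01]
      ring
    · rw [if_neg h0, if_neg h0]
      by_cases h1 : l = ⟨1, by omega⟩
      · subst h1
        rw [if_pos rfl, if_pos rfl]
        ring
      · rw [if_neg h1, if_neg h1]
        ring
  show ∑ l, ((nmat d x : SLd d) : Mtx d) ⟨1, by omega⟩ l * v l = _
  rw [Finset.sum_congr rfl fun l _ => hterm l, Finset.sum_add_distrib]
  rw [Finset.sum_ite_eq' Finset.univ, Finset.sum_ite_eq' Finset.univ]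
  simp

lemma xif_first (hd : 2 ≤ d) (hnm : ∀ x : Fin (d - 1) → ℝ, (ASL.ofSL (nmat d x) : ASL d k) ∈ H)
    (j : Fin k) : xif hproj hW hd j ⟨0, by omega⟩ = 0 := by
  set x : Fin (d-1) → ℝ := fun _ => 1 with hx
  have h0 : psi hproj hW (nmat d x) = 0 :=
    psi_eq_zero_of_mem hproj hW hd (hnm x)
  have h1 := psi_coboundary hproj hW hd (nmat d x) j
  rw [h0] at h1
  have h2 := congrFun h1.symm ⟨1, by omega⟩
  rw [Matrix.sub_mulVec, Matrix.one_mulVec] at h2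
  rw [Pi.sub_apply, mulVec_nmat_one hd x] at h2
  have hx0 : x ⟨0, by omega⟩ = 1 := rfl
  rw [hx0] at h2
  simp only [Pi.zero_apply] at h2
  linarith

lemma conj_ofVec (ξ : Fin k → Fin d → ℝ) (g : ASL d k) :
    ASL.ofVec ξ * g * (ASL.ofVec ξ)⁻¹
      = ⟨g.M, fun j => g.v j + ((1 : Mtx d) - (g.M : Mtx d)).mulVec (ξ j)⟩ := by
  have h1 : ASL.ofVec ξ * g
      = (⟨(1 : SLd d) * g.M, fun j => ξ j + ((1 : SLd d) : Mtx d).mulVec (g.v j)⟩ : ASL d k) :=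
    rfl
  have h2 : (ASL.ofVec ξ)⁻¹
      = (⟨(1 : SLd d)⁻¹, fun j => -((((1 : SLd d)⁻¹ : SLd d) : Mtx d).mulVec (ξ j))⟩ : ASL d k) :=
    rfl
  rw [h1, h2, mk_mul]
  ext j i
  · show ((((1 : SLd d) * g.M) * (1 : SLd d)⁻¹ : SLd d) : Mtx d) j i = (g.M : Mtx d) j i
    rw [one_mul, inv_one, mul_one]
  · show ((ξ j + ((1 : SLd d) : Mtx d).mulVec (g.v j))
        + (((1 : SLd d) * g.M : SLd d) : Mtx d).mulVec
            (-((((1 : SLd d)⁻¹ : SLd d) : Mtx d).mulVec (ξ j)))) i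
      = (g.v j + ((1 : Mtx d) - (g.M : Mtx d)).mulVec (ξ j)) i
    rw [one_mul, inv_one]
    simp only [Matrix.SpecialLinearGroup.coe_one, Matrix.one_mulVec, Matrix.mulVec_neg,
      Matrix.sub_mulVec, Pi.add_apply, Pi.neg_apply, Pi.sub_apply]
    ring

end Stmt8
end

/-- Let `H` be a closed subgroup of `G = SL(d,ℝ) ⋉ (ℝ^d)^k` with
`π(H) = SL(d,ℝ)` and `n₋(x) ∈ H` for all `x ∈ ℝ^{d-1}`. Then there are a linear subspace
`U ⊆ ℝ^k` and `ξ ∈ (e₁^⊥)^k` such that `H = (1_d,ξ) H_U (1_d,ξ)⁻¹`, where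
`H_U = SL(d,ℝ) ⋉ L(U)`. -/
theorem closed_subgroup_conjugate_HU (d k : ℕ) (hd : 2 ≤ d) (hk : 1 ≤ k)
    (H : Subgroup (ASL d k)) (hclosed : IsClosed (H : Set (ASL d k)))
    (hproj : (fun g : ASL d k => g.M) '' (H : Set (ASL d k)) = Set.univ)
    (hnm : ∀ x : Fin (d - 1) → ℝ, (ASL.ofSL (nmat d x) : ASL d k) ∈ H) :
    ∃ (U : Submodule ℝ (Fin k → ℝ)) (ξ : Fin k → Fin d → ℝ),
      (∀ j, ξ j ⟨0, by omega⟩ = 0) ∧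
      (H : Set (ASL d k))
        = (fun g => ASL.ofVec ξ * g * (ASL.ofVec ξ)⁻¹) '' {g : ASL d k | g.v ∈ LU d U} := by
  classical
  obtain ⟨W, hW⟩ := Submodule.exists_isCompl (Stmt8.Usub H)
  refine ⟨Stmt8.Usub H, Stmt8.xif hproj hW hd,
    fun j => Stmt8.xif_first hproj hW hd hnm j, ?_⟩
  ext g
  simp only [Set.mem_image, Set.mem_setOf_eq]
  constructor
  · intro hg
    refine ⟨⟨g.M, fun j => g.v j
        - ((1 : Stmt8.Mtx d) - (g.M : Stmt8.Mtx d)).mulVec (Stmt8.xif hproj hW hd j)⟩, ?_, ?_⟩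
    · show (fun j => g.v j
          - ((1 : Stmt8.Mtx d) - (g.M : Stmt8.Mtx d)).mulVec (Stmt8.xif hproj hW hd j))
        ∈ LU d (Stmt8.Usub H)
      have h1 := Stmt8.hdiff hproj hW hd (show (⟨g.M, g.v⟩ : ASL d k) ∈ H from hg)
      have h2 : (fun j => g.v j
          - ((1 : Stmt8.Mtx d) - (g.M : Stmt8.Mtx d)).mulVec (Stmt8.xif hproj hW hd j))
          = g.v - Stmt8.psi hproj hW g.M := by
        funext j
        rw [Pi.sub_apply, Stmt8.psi_coboundary hproj hW hd g.M j]
      rw [h2, ← Stmt8.Vset_eq_LU hproj hd]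
      exact h1
    · rw [Stmt8.conj_ofVec]
      ext j i
      · rfl
      · show ((g.v j
            - ((1 : Stmt8.Mtx d) - (g.M : Stmt8.Mtx d)).mulVec (Stmt8.xif hproj hW hd j))
            + ((1 : Stmt8.Mtx d) - (g.M : Stmt8.Mtx d)).mulVec (Stmt8.xif hproj hW hd j)) i
          = g.v j i
        simp
  · rintro ⟨g0, hg0, rfl⟩
    rw [Stmt8.conj_ofVec]
    have h2 : g0.v ∈ Stmt8.Vset H := by
      rw [Stmt8.Vset_eq_LU hproj hd]
      exact hg0
    have h3 := H.mul_mem h2 (Stmt8.psi_mem hproj hW hd g0.M)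
    rw [Stmt8.mk_mul] at h3
    have h4 : (⟨1 * g0.M, fun j => g0.v j
        + ((1 : SLd d) : Stmt8.Mtx d).mulVec (Stmt8.psi hproj hW g0.M j)⟩ : ASL d k)
        = ⟨g0.M, fun j => g0.v j
          + ((1 : Stmt8.Mtx d) - (g0.M : Stmt8.Mtx d)).mulVec (Stmt8.xif hproj hW hd j)⟩ := by
      ext j i
      · show (((1 : SLd d) * g0.M : SLd d) : Stmt8.Mtx d) j i = _
        rw [one_mul]
      · show (g0.v j + ((1 : SLd d) : Stmt8.Mtx d).mulVec (Stmt8.psi hproj hW g0.M j)) i = _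
        rw [Matrix.SpecialLinearGroup.coe_one, Matrix.one_mulVec,
          Stmt8.psi_coboundary hproj hW hd g0.M j]
    rwa [h4] at h3
end
end

section
/- Let d ≥ 2 and k ≥ 1, and let V be a closed subgroup of the additive group (ℝ^d)^k that is invariant under the componentwise action of SL(d,ℝ), i.e., Mξ ∈ V for every M ∈ SL(d,ℝ) and ξ ∈ V. Then there exists a linear subspace U ⊆ ℝ^k such that V = L(U). -/
open Matrix MeasureTheory Topology Filter Bornology

noncomputable section

/-- Double orthogonality for `dotp` on `Fin k → ℝ`. -/
lemma mem_of_dotp_orthogonal {k : ℕ} (U : Submodule ℝ (Fin k → ℝ)) (w : Fin k → ℝ)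
    (h : ∀ u : Fin k → ℝ, (∀ x ∈ U, dotp u x = 0) → dotp u w = 0) : w ∈ U := by
  classical
  let e : (Fin k → ℝ) ≃ₗ[ℝ] EuclideanSpace ℝ (Fin k) := (WithLp.linearEquiv 2 ℝ _).symm
  have hdot : ∀ u x : Fin k → ℝ, (inner ℝ (e u) (e x) : ℝ) = dotp u x := by
    intro u x
    simp [PiLp.inner_apply, dotp, e, RCLike.inner_apply, mul_comm]
  set W : Submodule ℝ (EuclideanSpace ℝ (Fin k)) :=
    U.map (e : (Fin k → ℝ) →ₗ[ℝ] EuclideanSpace ℝ (Fin k)) with hW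
  have hw2 : e w ∈ Wᗮᗮ := by
    rw [Submodule.mem_orthogonal]
    intro u hu
    have hu' : ∀ x ∈ U, dotp (e.symm u) x = 0 := by
      intro x hx
      have h0 : (inner ℝ (e x) u : ℝ) = 0 :=
        (Submodule.mem_orthogonal W u).mp hu (e x) ⟨x, hx, rfl⟩
      rw [real_inner_comm] at h0
      have h1 := hdot (e.symm u) x
      rw [LinearEquiv.apply_symm_apply] at h1
      rw [← h1]; exact h0
    have h2 := h (e.symm u) hu'
    rw [← hdot, LinearEquiv.apply_symm_apply] at h2
    exact h2
  rw [Submodule.orthogonal_orthogonal] at hw2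
  obtain ⟨x, hx, hex⟩ := hw2
  rwa [← e.injective hex]

/-- Let `V` be a closed subgroup of the additive group `(ℝ^d)^k` that is
invariant under the componentwise action of `SL(d,ℝ)`. Then `V = L(U)` for some linear
subspace `U ⊆ ℝ^k`. -/
theorem closed_SL_invariant_subgroup_eq_LU (d k : ℕ) (hd : 2 ≤ d) (hk : 1 ≤ k)
    (V : AddSubgroup (Fin k → Fin d → ℝ))
    (hVclosed : IsClosed (V : Set (Fin k → Fin d → ℝ)))
    (hVinv : ∀ M : SLd d, ∀ ξ ∈ V,
      (fun j => (M : Matrix (Fin d) (Fin d) ℝ).mulVec (ξ j)) ∈ V) :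
    ∃ U : Submodule ℝ (Fin k → ℝ), (V : Set (Fin k → Fin d → ℝ)) = LU d U := by
  classical
  -- Step 1: transvection trick
  have stepA : ∀ ξ ∈ V, ∀ a b : Fin d, a ≠ b → ∀ s : ℝ,
      (fun j => (s * ξ j b) • (Pi.single a 1 : Fin d → ℝ)) ∈ V := by
    intro ξ hξ a b hab s
    have hM : (Matrix.transvection a b s).det = 1 := Matrix.det_transvection_of_ne a b hab s
    have h1 : (fun j => (Matrix.transvection a b s).mulVec (ξ j)) ∈ V :=
      hVinv ⟨Matrix.transvection a b s, hM⟩ ξ hξ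
    have key : (fun j => (Matrix.transvection a b s).mulVec (ξ j)) =
        (fun j => ξ j + (s * ξ j b) • (Pi.single a 1 : Fin d → ℝ)) := by
      funext j i
      rw [Matrix.transvection, Matrix.add_mulVec, Matrix.one_mulVec]
      by_cases h : a = i <;>
        simp [Matrix.mulVec, Matrix.single, dotProduct, Pi.single_apply,
          ite_and, h, mul_comm]
    rw [show (fun j => (s * ξ j b) • (Pi.single a 1 : Fin d → ℝ)) =
        (fun j => ξ j + (s * ξ j b) • (Pi.single a 1 : Fin d → ℝ)) - ξ by
      funext j; simp]
    exact V.sub_mem (key ▸ h1) hξ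
  -- Step 2: rank-one elements from rows
  have stepB : ∀ ξ ∈ V, ∀ i : Fin d, ∀ v : Fin d → ℝ,
      (fun j => (ξ j i) • v) ∈ V := by
    intro ξ hξ i v
    have stepB1 : ∀ a : Fin d, ∀ t : ℝ,
        (fun j => (t * ξ j i) • (Pi.single a 1 : Fin d → ℝ)) ∈ V := by
      intro a t
      by_cases hai : a = i
      · subst hai
        have : Nontrivial (Fin d) := Fin.nontrivial_iff_two_le.mpr hd
        obtain ⟨c, hc⟩ : ∃ c : Fin d, c ≠ a := exists_ne a
        have hη := stepA ξ hξ c a hc 1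
        have hη2 := stepA _ hη a c hc.symm t
        have : (fun j => (t * ((1 * ξ j a) • (Pi.single c 1 : Fin d → ℝ)) c) •
            (Pi.single a 1 : Fin d → ℝ)) =
            (fun j => (t * ξ j a) • (Pi.single a 1 : Fin d → ℝ)) := by
          funext j; simp
        rw [this] at hη2
        exact hη2
      · exact stepA ξ hξ a i (by exact hai) t
    have hsum : (fun j => (ξ j i) • v) =
        ∑ a : Fin d, (fun j => (v a * ξ j i) • (Pi.single a 1 : Fin d → ℝ)) := by
      funext j i'
      simp [Finset.sum_apply, Pi.single_apply, mul_comm]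
    rw [hsum]
    exact AddSubgroup.sum_mem V (fun a _ => stepB1 a (v a))
  -- the subspace U
  set U : Submodule ℝ (Fin k → ℝ) :=
    Submodule.span ℝ {w | ∃ ξ ∈ V, ∃ i : Fin d, w = fun j => ξ j i} with hU
  -- Step 3: rank-one elements for every w ∈ U
  have stepC : ∀ w ∈ U, ∀ v : Fin d → ℝ, (fun j => (w j) • v) ∈ V := by
    intro w hw
    induction hw using Submodule.span_induction with
    | mem x hx =>
        obtain ⟨ξ, hξ, i, rfl⟩ := hx
        intro v; exact stepB ξ hξ i v
    | zero => intro v; simp only [Pi.zero_apply, zero_smul]; exact V.zero_mem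
    | add x y _ _ hx hy =>
        intro v
        have : (fun j => ((x + y) j) • v) = (fun j => (x j) • v) + (fun j => (y j) • v) := by
          funext j; simp [add_smul]
        rw [this]; exact V.add_mem (hx v) (hy v)
    | smul t x _ hx =>
        intro v
        have : (fun j => ((t • x) j) • v) = (fun j => (x j) • (t • v)) := by
          funext j; simp [smul_smul, mul_comm]
        rw [this]; exact hx (t • v)
  refine ⟨U, ?_⟩
  ext ξ
  constructor
  · -- V ⊆ LU
    intro hξ u hu
    funext i
    have hrow : (fun j => ξ j i) ∈ U := Submodule.subset_span ⟨ξ, hξ, i, rfl⟩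
    have := hu _ hrow
    simpa [xidot, dotp, Finset.sum_apply] using this
  · -- LU ⊆ V
    intro hξ
    have hrow : ∀ i : Fin d, (fun j => ξ j i) ∈ U := by
      intro i
      apply mem_of_dotp_orthogonal
      intro u hu
      have := hξ u hu
      have := congrFun this i
      simpa [xidot, dotp, Finset.sum_apply] using this
    have : ξ = ∑ i : Fin d, (fun j => (ξ j i) • (Pi.single i 1 : Fin d → ℝ)) := by
      funext j i'
      simp [Finset.sum_apply, Pi.single_apply]
    rw [show (ξ ∈ (V : Set (Fin k → Fin d → ℝ))) = (ξ ∈ V) from rfl]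
    rw [this]
    exact AddSubgroup.sum_mem V (fun i _ => stepC _ (hrow i) _)
end
end

section
/- In the dynamical setup for general d (with u_j(J)·f(J) > 0 for all j, J and the Ω_j bounded), for every ε > 0 and T > 0 there exists ρ_0 > 0 such that for all ρ ∈ (0,ρ_0), all j ∈ {1,…,k} and all J ∈ U: Ã_{j,ε,T−ε}(J) ⊆ D(ρ) R_{v(J)} A_{j,ρ,T}(J) ⊆ Ã_{j,−ε,T+ε}(J). -/
open Matrix MeasureTheory Topology Filter Bornology

noncomputable section

/-- The torus `𝕋^d = ℝ^d/ℤ^d`, realized as `(ℝ/ℤ)^d`. -/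
abbrev Torus (d : ℕ) := Fin d → AddCircle (1 : ℝ)

/-- The projection `ℝ^d → 𝕋^d`. -/
def tproj {d : ℕ} (v : Fin d → ℝ) : Torus d := fun i => (v i : AddCircle (1 : ℝ))

/-- A map `U → 𝕋^d` is smooth if it admits smooth local lifts to `ℝ^d` near every point of `U`. -/
def SmoothTorusMap {m d : ℕ} (U : Set (Fin m → ℝ)) (θ : (Fin m → ℝ) → Torus d) : Prop :=
  ∀ J ∈ U, ∃ V ∈ nhds J, ∃ g : (Fin m → ℝ) → (Fin d → ℝ),
    ContDiffOn ℝ (⊤ : ℕ∞) g V ∧ ∀ x ∈ V, tproj (g x) = θ x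

/-- `λ` is `f`-regular: the pushforward of `λ` under `J ↦ f(J)/‖f(J)‖` is absolutely
continuous with respect to the Lebesgue (surface) measure on the unit sphere `S_1^{d-1}`,
realized here as the `(d-1)`-dimensional Hausdorff measure restricted to the sphere. -/
def fRegular {m d : ℕ} (f : (Fin m → ℝ) → (Fin d → ℝ)) (lam : Measure (Fin m → ℝ)) : Prop :=
  (lam.map (fun J => (enorm' (f J))⁻¹ • f J)) ≪ (μH[(d : ℝ) - 1].restrict (unitSphere d))

/-- The fiber `Ω(J) = {x ∈ ℝ^{d-1} : (x,J) ∈ Ω}` of a set `Ω ⊆ ℝ^{d-1} × ℝ^m`. -/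
def Omfiber {d m : ℕ} (OmA : Set ((Fin (d - 1) → ℝ) × (Fin m → ℝ))) (J : Fin m → ℝ) :
    Set (Fin (d - 1) → ℝ) := {x | (x, J) ∈ OmA}

/-- The mean-return-time normalization
`σ̄^{(k)}(J) = (Σ_{j} Leb(Ω_j(J)) · (u_j(J)·f(J)))⁻¹`. -/
def sigmabar {d k m : ℕ} (u : Fin k → (Fin m → ℝ) → Fin d → ℝ)
    (f : (Fin m → ℝ) → Fin d → ℝ)
    (Om : Fin k → Set ((Fin (d - 1) → ℝ) × (Fin m → ℝ))) (J : Fin m → ℝ) : ℝ :=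
  (∑ j, (volume (Omfiber (Om j) J)).toReal * dotp (u j J) (f J))⁻¹

/-- Membership of a point `p ∈ 𝕋^d` in the leaf-`J` part of the target set
`D_ρ^{(k)} = ⋃_j {(φ_j(J) + ρ R_{u_j(J)}⁻¹(0,x)ᵗ, J) : (x,J) ∈ Ω_j}`. -/
def targetD {d k m : ℕ} (R : (Fin d → ℝ) → SLd d) (u : Fin k → (Fin m → ℝ) → Fin d → ℝ)
    (phiT : Fin k → (Fin m → ℝ) → Torus d)
    (Om : Fin k → Set ((Fin (d - 1) → ℝ) × (Fin m → ℝ)))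
    (ρ : ℝ) (p : Torus d) (J : Fin m → ℝ) : Prop :=
  ∃ j : Fin k, ∃ x : Fin (d - 1) → ℝ, (x, J) ∈ Om j ∧
    p = phiT j J + tproj (ρ • (((R (u j J))⁻¹ : SLd d) : Matrix (Fin d) (Fin d) ℝ).mulVec (cons1 0 x))

/-- The set of hitting times `{t > 0 : θ₀ + t f(J) ∈ D_ρ^{(k)}(J)}`. -/
def hitSet {d k m : ℕ} (f : (Fin m → ℝ) → Fin d → ℝ) (R : (Fin d → ℝ) → SLd d)
    (u : Fin k → (Fin m → ℝ) → Fin d → ℝ) (phiT : Fin k → (Fin m → ℝ) → Torus d)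
    (Om : Fin k → Set ((Fin (d - 1) → ℝ) × (Fin m → ℝ)))
    (θ0 : Torus d) (J : Fin m → ℝ) (ρ : ℝ) : Set ℝ :=
  {t : ℝ | 0 < t ∧ targetD R u phiT Om ρ (θ0 + tproj (t • f J)) J}

/-- The `n`-th smallest element of a (discrete) set `T ⊆ ℝ` of times:
`t_0 = 0` and `t_{n+1} = inf {t ∈ T : t > t_n}`. -/
def nthHit (T : Set ℝ) : ℕ → ℝ
  | 0 => 0
  | n + 1 => sInf {t ∈ T | nthHit T n < t}

/-- The cylinder `A_{j,ρ,T}(J) = {t f(J) - ρ R_{u_j(J)}⁻¹(0,x)ᵗ : x ∈ Ω_j(J), 0 < t ≤ T σ̄(J) ρ^{1-d}}`. -/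
def cylA {d k m : ℕ} (f : (Fin m → ℝ) → Fin d → ℝ) (R : (Fin d → ℝ) → SLd d)
    (u : Fin k → (Fin m → ℝ) → Fin d → ℝ)
    (Om : Fin k → Set ((Fin (d - 1) → ℝ) × (Fin m → ℝ)))
    (j : Fin k) (ρ T : ℝ) (J : Fin m → ℝ) : Set (Fin d → ℝ) :=
  {y | ∃ x ∈ Omfiber (Om j) J, ∃ t : ℝ, 0 < t ∧ t ≤ T * sigmabar u f Om J / ρ ^ (d - 1) ∧
    y = t • f J - ρ • (((R (u j J))⁻¹ : SLd d) : Matrix (Fin d) (Fin d) ℝ).mulVec (cons1 0 x)}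

/-- The linear map `R̃_j(J) : ℝ^{d-1} → ℝ^{d-1}`, `x ↦ (ℜ_j(J)(0,x)ᵗ)_⊥`, given by the
lower-right `(d-1)×(d-1)` block of `ℜ_j(J) = R_{v(J)} R_{u_j(J)}⁻¹`, where `v(J) = f(J)/‖f(J)‖`. -/
def tildeR {d k m : ℕ} (R : (Fin d → ℝ) → SLd d) (f : (Fin m → ℝ) → Fin d → ℝ)
    (u : Fin k → (Fin m → ℝ) → Fin d → ℝ) (j : Fin k) (J : Fin m → ℝ)
    (x : Fin (d - 1) → ℝ) : Fin (d - 1) → ℝ :=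
  chop (((R ((enorm' (f J))⁻¹ • f J) * (R (u j J))⁻¹ : SLd d) :
    Matrix (Fin d) (Fin d) ℝ).mulVec (cons1 0 x))

/-- The normalized cylinder
`Ã_{j,Y,Z}(J) = {(t, -R̃_j(J)x)ᵗ : x ∈ Ω_j(J), σ̄(J)‖f(J)‖ Y < t ≤ σ̄(J)‖f(J)‖ Z}`. -/
def tildeA {d k m : ℕ} (f : (Fin m → ℝ) → Fin d → ℝ) (R : (Fin d → ℝ) → SLd d)
    (u : Fin k → (Fin m → ℝ) → Fin d → ℝ)
    (Om : Fin k → Set ((Fin (d - 1) → ℝ) × (Fin m → ℝ)))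
    (j : Fin k) (Y Z : ℝ) (J : Fin m → ℝ) : Set (Fin d → ℝ) :=
  {y | ∃ x ∈ Omfiber (Om j) J, ∃ t : ℝ,
    sigmabar u f Om J * enorm' (f J) * Y < t ∧ t ≤ sigmabar u f Om J * enorm' (f J) * Z ∧
    y = cons1 t (-(tildeR R f u j J x))}


section Helpers

lemma sum_cons1_sq (n : ℕ) (t : ℝ) (x : Fin n → ℝ) :
    ∑ i : Fin (n+1), cons1 (d := n+1) t x i ^ 2 = t ^ 2 + ∑ i, x i ^ 2 := by
  rw [Fin.sum_univ_succ]
  have h0 : cons1 (d := n+1) t x 0 = t := by simp [cons1]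
  have hs : ∀ i : Fin n, cons1 (d := n+1) t x i.succ = x i := by
    intro i; simp [cons1, Fin.succ]
  rw [h0]
  exact congrArg (t ^ 2 + ·) (Finset.sum_congr rfl fun i _ => by rw [hs])

lemma chop_eq_succ (n : ℕ) (y : Fin (n+1) → ℝ) (i : Fin n) :
    chop (d := n+1) y i = y i.succ := rfl

lemma cons1_zero (n : ℕ) (t : ℝ) (x : Fin n → ℝ) : cons1 (d := n+1) t x 0 = t := by
  simp [cons1]

lemma cons1_succ (n : ℕ) (t : ℝ) (x : Fin n → ℝ) (i : Fin n) :
    cons1 (d := n+1) t x i.succ = x i := by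
  simp [cons1, Fin.succ]

lemma sum_sq_eq_dot {n : ℕ} (v : Fin n → ℝ) : ∑ i, v i ^ 2 = dotProduct v v := by
  simp [dotProduct, sq]

lemma orth_mulVec_sum_sq {n : ℕ} (A : Matrix (Fin n) (Fin n) ℝ) (h : A * Aᵀ = 1)
    (v : Fin n → ℝ) : ∑ i, (A.mulVec v) i ^ 2 = ∑ i, v i ^ 2 := by
  have h' : Aᵀ * A = 1 := mul_eq_one_comm.mp h
  rw [sum_sq_eq_dot, sum_sq_eq_dot]
  calc A.mulVec v ⬝ᵥ A.mulVec v = (Aᵀ.mulVec (A.mulVec v)) ⬝ᵥ v := by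
        rw [Matrix.mulVec_transpose, ← Matrix.dotProduct_mulVec]
    _ = v ⬝ᵥ v := by rw [Matrix.mulVec_mulVec, h', Matrix.one_mulVec]

lemma sl_inv_coe_transpose {n : ℕ} (A : SLd n)
    (h : (A : Matrix (Fin n) (Fin n) ℝ) * (A : Matrix (Fin n) (Fin n) ℝ)ᵀ = 1) :
    ((A⁻¹ : SLd n) : Matrix (Fin n) (Fin n) ℝ) = (A : Matrix (Fin n) (Fin n) ℝ)ᵀ := by
  have h' : (A : Matrix (Fin n) (Fin n) ℝ)ᵀ * (A : Matrix (Fin n) (Fin n) ℝ) = 1 :=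
    mul_eq_one_comm.mp h
  have h1 : (A : Matrix (Fin n) (Fin n) ℝ) * ((A⁻¹ : SLd n) : Matrix (Fin n) (Fin n) ℝ) = 1 := by
    rw [← Matrix.SpecialLinearGroup.coe_mul, mul_inv_cancel,
      Matrix.SpecialLinearGroup.coe_one]
  calc ((A⁻¹ : SLd n) : Matrix (Fin n) (Fin n) ℝ)
      = 1 * ((A⁻¹ : SLd n) : Matrix (Fin n) (Fin n) ℝ) := (one_mul _).symm
    _ = (A : Matrix (Fin n) (Fin n) ℝ)ᵀ *
        ((A : Matrix (Fin n) (Fin n) ℝ) * ((A⁻¹ : SLd n) : Matrix (Fin n) (Fin n) ℝ)) := by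
        rw [← mul_assoc, h']
    _ = (A : Matrix (Fin n) (Fin n) ℝ)ᵀ := by rw [h1, mul_one]

lemma Dmat_coe (n : ℕ) (ρ : ℝ) (hρ : ρ ≠ 0) :
    ((Dmat n ρ : SLd n) : Matrix (Fin n) (Fin n) ℝ)
      = Matrix.diagonal (fun i : Fin n => if (i : ℕ) = 0 then ρ ^ (n - 1) else ρ⁻¹) := by
  simp [Dmat, hρ]

end Helpers

section MainComp

lemma main_comp (n : ℕ) (ρ : ℝ) (hρ : ρ ≠ 0) (Rv Ru : SLd (n+1))
    (fJ c : Fin (n+1) → ℝ) (nf t : ℝ)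
    (h1 : (Rv : Matrix (Fin (n+1)) (Fin (n+1)) ℝ).mulVec fJ = nf • e1vec (n+1)) :
    ((Dmat (n+1) ρ * Rv : SLd (n+1)) : Matrix (Fin (n+1)) (Fin (n+1)) ℝ).mulVec
      (t • fJ - ρ • ((Ru⁻¹ : SLd (n+1)) : Matrix (Fin (n+1)) (Fin (n+1)) ℝ).mulVec c)
    = cons1 (d := n+1)
        (t * nf * ρ ^ n
          - ρ ^ (n+1) * ((Rv * Ru⁻¹ : SLd (n+1)) : Matrix (Fin (n+1)) (Fin (n+1)) ℝ).mulVec c 0)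
        (fun i =>
          -(chop (d := n+1)
              (((Rv * Ru⁻¹ : SLd (n+1)) : Matrix (Fin (n+1)) (Fin (n+1)) ℝ).mulVec c) i)) := by
  set w := ((Rv * Ru⁻¹ : SLd (n+1)) : Matrix (Fin (n+1)) (Fin (n+1)) ℝ).mulVec c with hw
  have hw' : (Rv : Matrix (Fin (n+1)) (Fin (n+1)) ℝ).mulVec
      (((Ru⁻¹ : SLd (n+1)) : Matrix (Fin (n+1)) (Fin (n+1)) ℝ).mulVec c) = w := by
    rw [hw, Matrix.SpecialLinearGroup.coe_mul, ← Matrix.mulVec_mulVec]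
  rw [Matrix.SpecialLinearGroup.coe_mul, ← Matrix.mulVec_mulVec]
  have hRv : (Rv : Matrix (Fin (n+1)) (Fin (n+1)) ℝ).mulVec
      (t • fJ - ρ • ((Ru⁻¹ : SLd (n+1)) : Matrix (Fin (n+1)) (Fin (n+1)) ℝ).mulVec c)
      = t • (nf • e1vec (n+1)) - ρ • w := by
    rw [Matrix.mulVec_sub, Matrix.mulVec_smul, Matrix.mulVec_smul, h1, hw']
  rw [hRv, Dmat_coe _ _ hρ]
  funext i
  rw [Matrix.mulVec_diagonal]
  refine Fin.cases ?_ ?_ i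
  · have : e1vec (n+1) 0 = 1 := by simp [e1vec]
    rw [cons1_zero]
    simp only [Pi.sub_apply, Pi.smul_apply, this, smul_eq_mul]
    have hn : (n + 1) - 1 = n := by omega
    rw [show ((0 : Fin (n+1)) : ℕ) = 0 from rfl]
    simp only [if_pos rfl, if_true, hn]
    ring
  · intro i
    have he : e1vec (n+1) i.succ = 0 := by
      simp [e1vec, Fin.succ]
    rw [cons1_succ, chop_eq_succ]
    have hne : ((i.succ : Fin (n+1)) : ℕ) ≠ 0 := by simp [Fin.succ]
    simp only [Pi.sub_apply, Pi.smul_apply, he, smul_eq_mul, if_neg hne]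
    field_simp
    ring

end MainComp

set_option maxHeartbeats 1000000 in
/-- **Lemma 7.2.** In the dynamical setup for general `d` (with
`u_j(J)·f(J) > 0` and the `Ω_j` bounded), for every `ε > 0` and `T > 0` there is `ρ₀ > 0`
such that for all `ρ ∈ (0,ρ₀)`, all `j` and all `J ∈ U`:
`Ã_{j,ε,T-ε}(J) ⊆ D(ρ) R_{v(J)} A_{j,ρ,T}(J) ⊆ Ã_{j,-ε,T+ε}(J)`. -/
theorem cylinder_rescaling (d k m : ℕ) (hd : 2 ≤ d) (hk : 1 ≤ k) (hm : 1 ≤ m)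
    (U : Set (Fin m → ℝ)) (hUopen : IsOpen U)
    (f : (Fin m → ℝ) → Fin d → ℝ) (hfsmooth : ContDiffOn ℝ (⊤ : ℕ∞) f U)
    (hfne : ∀ J ∈ U, f J ≠ 0)
    (R : (Fin d → ℝ) → SLd d)
    (hRso : ∀ v ∈ unitSphere d,
      (R v : Matrix (Fin d) (Fin d) ℝ) * (R v : Matrix (Fin d) (Fin d) ℝ)ᵀ = 1)
    (hRe1 : ∀ v ∈ unitSphere d, (R v : Matrix (Fin d) (Fin d) ℝ).mulVec v = e1vec d)
    (u : Fin k → (Fin m → ℝ) → Fin d → ℝ)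
    (husph : ∀ j : Fin k, ∀ J ∈ U, u j J ∈ unitSphere d)
    (Om : Fin k → Set ((Fin (d - 1) → ℝ) × (Fin m → ℝ)))
    (hOmopen : ∀ j, IsOpen (Om j)) (hOmbdd : ∀ j, IsBounded (Om j))
    (hOmU : ∀ j, Om j ⊆ Set.univ ×ˢ U)
    (hOmne : ∀ j : Fin k, ∀ J ∈ U, (Omfiber (Om j) J).Nonempty)
    (htrans : ∀ j : Fin k, ∀ J ∈ U, 0 < dotp (u j J) (f J))
    :
    ∀ ε : ℝ, 0 < ε → ∀ T : ℝ, 0 < T → ∃ ρ0 : ℝ, 0 < ρ0 ∧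
      ∀ ρ : ℝ, 0 < ρ → ρ < ρ0 → ∀ j : Fin k, ∀ J ∈ U,
        tildeA f R u Om j ε (T - ε) J ⊆
          (fun y => ((Dmat d ρ * R ((enorm' (f J))⁻¹ • f J) : SLd d) :
            Matrix (Fin d) (Fin d) ℝ).mulVec y) '' cylA f R u Om j ρ T J ∧
        (fun y => ((Dmat d ρ * R ((enorm' (f J))⁻¹ • f J) : SLd d) :
            Matrix (Fin d) (Fin d) ℝ).mulVec y) '' cylA f R u Om j ρ T J ⊆
          tildeA f R u Om j (-ε) (T + ε) J := by
  intro ε hε T hT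
  obtain ⟨n, rfl⟩ : ∃ n, d = n + 1 := ⟨d - 1, by omega⟩
  -- uniform bound on Ω
  choose r hr using fun j => ((hOmbdd j).subset_closedBall 0)
  set C : ℝ := 1 + ∑ j, |r j| with hCdef
  have hC1 : 1 ≤ C := by
    have : (0:ℝ) ≤ ∑ j, |r j| := Finset.sum_nonneg fun j _ => abs_nonneg _
    simp [hCdef]; linarith
  have hC0 : 0 ≤ C := le_trans zero_le_one hC1
  have hxC : ∀ j : Fin k, ∀ x : Fin n → ℝ, ∀ J : Fin m → ℝ,
      (x, J) ∈ Om j → ∀ i, |x i| ≤ C := by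
    intro j x J hx i
    have h1 : (x, J) ∈ Metric.closedBall 0 (r j) := hr j hx
    rw [Metric.mem_closedBall] at h1
    have h2 : dist x (0 : Fin n → ℝ) ≤ dist ((x, J) : (Fin n → ℝ) × (Fin m → ℝ)) 0 := by
      rw [Prod.dist_eq]; exact le_max_left _ _
    have h3 : dist (x i) (0 : ℝ) ≤ dist x (0 : Fin n → ℝ) := dist_le_pi_dist x 0 i
    rw [Real.dist_eq, sub_zero] at h3
    have h4 : r j ≤ C := by
      have h5 : |r j| ≤ ∑ j', |r j'| :=
        Finset.single_le_sum (fun j' _ => abs_nonneg (r j')) (Finset.mem_univ j)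
      have := le_abs_self (r j)
      simp only [hCdef]; linarith
    linarith
  set Csq : ℝ := (n : ℝ) * C ^ 2 with hCsqdef
  have hSx : ∀ j : Fin k, ∀ x : Fin n → ℝ, ∀ J : Fin m → ℝ,
      (x, J) ∈ Om j → ∑ i, x i ^ 2 ≤ Csq := by
    intro j x J hx
    have := Finset.sum_le_card_nsmul Finset.univ (fun i => x i ^ 2) (C ^ 2)
      (fun i _ => by
        show x i ^ 2 ≤ C ^ 2
        have := hxC j x J hx i
        nlinarith [abs_nonneg (x i), sq_abs (x i)])
    simpa [Finset.card_univ, nsmul_eq_mul, hCsqdef] using this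
  set Cw : ℝ := Real.sqrt Csq with hCwdef
  have hCw0 : 0 ≤ Cw := Real.sqrt_nonneg _
  -- volume bound
  have hfibsub : ∀ j : Fin k, ∀ J : Fin m → ℝ,
      Omfiber (Om j) J ⊆ Metric.closedBall (0 : Fin n → ℝ) C := by
    intro j J x hx
    rw [Metric.mem_closedBall, dist_pi_le_iff hC0]
    intro i
    rw [show (0 : Fin n → ℝ) i = (0:ℝ) from rfl, Real.dist_eq, sub_zero]
    exact hxC j x J hx i
  have hballtop : volume (Metric.closedBall (0 : Fin n → ℝ) C) ≠ ⊤ :=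
    (isCompact_closedBall _ _).measure_lt_top.ne
  set CLeb : ℝ := (volume (Metric.closedBall (0 : Fin n → ℝ) C)).toReal with hCLebdef
  have hfibtop : ∀ j : Fin k, ∀ J : Fin m → ℝ, volume (Omfiber (Om j) J) ≠ ⊤ :=
    fun j J => ne_top_of_le_ne_top hballtop (measure_mono (hfibsub j J))
  have hfible : ∀ j : Fin k, ∀ J : Fin m → ℝ,
      (volume (Omfiber (Om j) J)).toReal ≤ CLeb :=
    fun j J => ENNReal.toReal_mono hballtop (measure_mono (hfibsub j J))
  have hCLeb0 : 0 ≤ CLeb := ENNReal.toReal_nonneg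
  set c0 : ℝ := ((k : ℝ) * CLeb + 1)⁻¹ with hc0def
  have hkC : (0:ℝ) < (k : ℝ) * CLeb + 1 := by
    have := mul_nonneg (Nat.cast_nonneg k : (0:ℝ) ≤ (k:ℝ)) hCLeb0
    linarith
  have hc0 : 0 < c0 := by rw [hc0def]; exact inv_pos.mpr hkC
  clear_value C Csq Cw CLeb c0
  refine ⟨min 1 (ε * c0 / (Cw + 1)),
    lt_min one_pos (div_pos (mul_pos hε hc0) (by linarith : (0:ℝ) < Cw + 1)), ?_⟩
  intro ρ hρ0 hρρ0 j J hJ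
  have hρne : ρ ≠ 0 := ne_of_gt hρ0
  have hρ1 : ρ < 1 := lt_of_lt_of_le hρρ0 (min_le_left _ _)
  have hρn1 : ρ ^ (n + 1) ≤ ρ := pow_le_of_le_one hρ0.le hρ1.le (by omega)
  -- per-J quantities
  set F : ℝ := enorm' (f J) with hFdef
  have hfJ : f J ≠ 0 := hfne J hJ
  have hF : 0 < F := by
    rw [hFdef, enorm']
    apply Real.sqrt_pos.mpr
    obtain ⟨i, hi⟩ := Function.ne_iff.mp hfJ
    exact Finset.sum_pos' (fun i' _ => sq_nonneg _)
      ⟨i, Finset.mem_univ i, by rw [← sq_abs]; exact pow_pos (abs_pos.mpr hi) 2⟩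
  have hFsq : F ^ 2 = ∑ i, f J i ^ 2 := by
    rw [hFdef, enorm', Real.sq_sqrt (Finset.sum_nonneg fun i _ => sq_nonneg _)]
  have hvsph : (F⁻¹ • f J) ∈ unitSphere (n+1) := by
    show ∑ i, (F⁻¹ • f J) i ^ 2 = 1
    have : ∀ i, (F⁻¹ • f J) i ^ 2 = F⁻¹ ^ 2 * f J i ^ 2 := by
      intro i; simp [mul_pow]
    rw [Finset.sum_congr rfl fun i _ => this i, ← Finset.mul_sum, ← hFsq]
    field_simp
  set Rv : SLd (n+1) := R (F⁻¹ • f J) with hRvdef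
  set Ru : SLd (n+1) := R (u j J) with hRudef
  have hRvO : (Rv : Matrix (Fin (n+1)) (Fin (n+1)) ℝ) *
      (Rv : Matrix (Fin (n+1)) (Fin (n+1)) ℝ)ᵀ = 1 := by
    rw [hRvdef]; exact hRso _ hvsph
  have hRuO : (Ru : Matrix (Fin (n+1)) (Fin (n+1)) ℝ) *
      (Ru : Matrix (Fin (n+1)) (Fin (n+1)) ℝ)ᵀ = 1 := by
    rw [hRudef]; exact hRso _ (husph j J hJ)
  have h1 : (Rv : Matrix (Fin (n+1)) (Fin (n+1)) ℝ).mulVec (f J) = F • e1vec (n+1) := by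
    have hfv : f J = F • (F⁻¹ • f J) := by rw [smul_inv_smul₀ (ne_of_gt hF)]
    rw [hRvdef]
    nth_rewrite 2 [hfv]
    rw [Matrix.mulVec_smul, hRe1 _ hvsph]
  -- the rotated vector
  set ℜ : Matrix (Fin (n+1)) (Fin (n+1)) ℝ :=
    ((Rv * Ru⁻¹ : SLd (n+1)) : Matrix (Fin (n+1)) (Fin (n+1)) ℝ) with hℜdef
  have hwb : ∀ x : Fin n → ℝ, ∑ i, x i ^ 2 ≤ Csq →
      |(ℜ.mulVec (cons1 (d := n+1) 0 x)) 0| ≤ Cw := by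
    intro x hx
    set c : Fin (n+1) → ℝ := cons1 (d := n+1) 0 x with hcdef
    have hsum : ∑ i, (ℜ.mulVec c) i ^ 2 = ∑ i, c i ^ 2 := by
      have e1 : ℜ.mulVec c = (Rv : Matrix (Fin (n+1)) (Fin (n+1)) ℝ).mulVec
          (((Ru⁻¹ : SLd (n+1)) : Matrix (Fin (n+1)) (Fin (n+1)) ℝ).mulVec c) := by
        rw [hℜdef, Matrix.SpecialLinearGroup.coe_mul, ← Matrix.mulVec_mulVec]
      rw [e1, orth_mulVec_sum_sq _ hRvO, sl_inv_coe_transpose Ru hRuO,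
        orth_mulVec_sum_sq _ (by
          rw [Matrix.transpose_transpose]
          exact mul_eq_one_comm.mp hRuO)]
    have hc0' : ∑ i, c i ^ 2 = 0 ^ 2 + ∑ i, x i ^ 2 := sum_cons1_sq n 0 x
    have h2 : (ℜ.mulVec c 0) ^ 2 ≤ ∑ i, (ℜ.mulVec c) i ^ 2 :=
      Finset.single_le_sum (f := fun i : Fin (n+1) => (ℜ.mulVec c) i ^ 2)
        (fun i _ => sq_nonneg _) (Finset.mem_univ (0 : Fin (n+1)))
    have h3 : (ℜ.mulVec c 0) ^ 2 ≤ Csq := by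
      rw [hsum, hc0'] at h2; linarith
    calc |(ℜ.mulVec c) 0| = Real.sqrt ((ℜ.mulVec c 0) ^ 2) := (Real.sqrt_sq_eq_abs _).symm
      _ ≤ Real.sqrt Csq := Real.sqrt_le_sqrt h3
      _ = Cw := hCwdef.symm
  -- sigma bounds
  set σ : ℝ := sigmabar u f Om J with hσdef
  set S : ℝ := ∑ j', (volume (Omfiber (Om j') J)).toReal * dotp (u j' J) (f J) with hSdef
  have hterm_pos : ∀ j' : Fin k,
      0 < (volume (Omfiber (Om j') J)).toReal * dotp (u j' J) (f J) := by
    intro j'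
    apply mul_pos
    · apply ENNReal.toReal_pos _ (hfibtop j' J)
      have hopen : IsOpen (Omfiber (Om j') J) :=
        (hOmopen j').preimage (continuous_id.prodMk continuous_const)
      exact (hopen.measure_pos volume (hOmne j' J hJ)).ne'
    · exact htrans j' J hJ
  have hS_pos : 0 < S := by
    rw [hSdef]
    exact Finset.sum_pos (fun j' _ => hterm_pos j') ⟨⟨0, hk⟩, Finset.mem_univ _⟩
  have hdotle : ∀ j' : Fin k, dotp (u j' J) (f J) ≤ F := by
    intro j'
    have hcs := Finset.sum_mul_sq_le_sq_mul_sq Finset.univ (fun i => u j' J i) (fun i => f J i)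
    have hu1 : ∑ i, u j' J i ^ 2 = 1 := husph j' J hJ
    have : dotp (u j' J) (f J) ^ 2 ≤ F ^ 2 := by
      rw [hFsq, dotp]; calc (∑ i, u j' J i * f J i) ^ 2
            ≤ (∑ i, u j' J i ^ 2) * ∑ i, f J i ^ 2 := hcs
        _ = ∑ i, f J i ^ 2 := by rw [hu1, one_mul]
    calc dotp (u j' J) (f J) ≤ |dotp (u j' J) (f J)| := le_abs_self _
      _ = Real.sqrt (dotp (u j' J) (f J) ^ 2) := (Real.sqrt_sq_eq_abs _).symm
      _ ≤ Real.sqrt (F ^ 2) := Real.sqrt_le_sqrt this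
      _ = F := Real.sqrt_sq hF.le
  have hS_le : S ≤ (k : ℝ) * (CLeb * F) := by
    rw [hSdef]
    calc ∑ j', (volume (Omfiber (Om j') J)).toReal * dotp (u j' J) (f J)
        ≤ ∑ _j' : Fin k, CLeb * F := Finset.sum_le_sum fun j' _ =>
          mul_le_mul (hfible j' J) (hdotle j') (htrans j' J hJ).le hCLeb0
      _ = (k : ℝ) * (CLeb * F) := by simp [Finset.sum_const, Finset.card_univ, nsmul_eq_mul]
  have hσS : σ = S⁻¹ := by rw [hσdef, hSdef]; rfl
  have hσpos : 0 < σ := by rw [hσS]; exact inv_pos.mpr hS_pos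
  set P : ℝ := σ * F with hPdef
  have hPpos : 0 < P := mul_pos hσpos hF
  have hB : c0 ≤ P := by
    rw [hPdef, hσS, hc0def]
    rw [inv_eq_one_div, inv_mul_eq_div]
    rw [div_le_div_iff₀ (by positivity) hS_pos]
    have : S ≤ ((k : ℝ) * CLeb + 1) * F := by nlinarith
    linarith
  have hkey : ∀ W : ℝ, |W| ≤ Cw → ρ ^ (n + 1) * |W| < ε * P := by
    intro W hW
    have hρ2 : ρ < ε * c0 / (Cw + 1) := lt_of_lt_of_le hρρ0 (min_le_right _ _)
    have h1' : ρ ^ (n+1) * |W| ≤ ρ * (Cw + 1) := by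
      calc ρ ^ (n+1) * |W| ≤ ρ * |W| := mul_le_mul_of_nonneg_right hρn1 (abs_nonneg W)
        _ ≤ ρ * (Cw + 1) := mul_le_mul_of_nonneg_left (by linarith [abs_nonneg W]) hρ0.le
    have h2' : ρ * (Cw + 1) < ε * c0 := by
      have h3' : ρ * (Cw + 1) < (ε * c0 / (Cw + 1)) * (Cw + 1) :=
        mul_lt_mul_of_pos_right hρ2 (by positivity)
      rwa [div_mul_cancel₀ _ (by positivity : Cw + 1 ≠ 0)] at h3'
    have h4' : ε * c0 ≤ ε * P := mul_le_mul_of_nonneg_left hB hε.le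
    linarith
  have htR : ∀ x : Fin n → ℝ, tildeR R f u j J x =
      chop (d := n+1) (ℜ.mulVec (cons1 (d := n+1) 0 x)) := by
    intro x
    simp only [tildeR, hℜdef, hRvdef, hRudef, hFdef]
  clear_value F Rv Ru ℜ σ S P
  constructor
  · -- tildeA ε (T-ε) ⊆ image
    rintro z ⟨x, hx, s, hs1, hs2, rfl⟩
    have hPe : sigmabar u f Om J * enorm' (f J) = P := by rw [hPdef, hσdef, hFdef]
    rw [hPe] at hs1 hs2
    set W : ℝ := (ℜ.mulVec (cons1 (d := n+1) 0 x)) 0 with hWdef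
    clear_value W
    have hWb : |W| ≤ Cw := by rw [hWdef]; exact hwb x (hSx j x J hx)
    have hWkey : ρ ^ (n+1) * |W| < ε * P := hkey W hWb
    have hD : (0:ℝ) < F * ρ ^ n := mul_pos hF (pow_pos hρ0 n)
    set t : ℝ := (s + ρ ^ (n+1) * W) / (F * ρ ^ n) with htdef
    clear_value t
    have h5 : ρ ^ (n+1) * (-|W|) ≤ ρ ^ (n+1) * W :=
      mul_le_mul_of_nonneg_left (neg_abs_le W) (pow_nonneg hρ0.le _)
    have h5' : ρ ^ (n+1) * W ≤ ρ ^ (n+1) * |W| :=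
      mul_le_mul_of_nonneg_left (le_abs_self W) (pow_nonneg hρ0.le _)
    have hnum_pos : 0 < s + ρ ^ (n+1) * W := by linarith
    have ht0 : 0 < t := by rw [htdef]; exact div_pos hnum_pos hD
    have hnum_le : s + ρ ^ (n+1) * W ≤ T * P := by linarith
    have htle : t ≤ T * σ / ρ ^ n := by
      have h6 : t ≤ T * P / (F * ρ ^ n) := by
        rw [htdef]; exact (div_le_div_iff_of_pos_right hD).mpr hnum_le
      have heq : T * P / (F * ρ ^ n) = T * σ / ρ ^ n := by
        rw [hPdef, div_eq_div_iff hD.ne' (pow_pos hρ0 n).ne']; ring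
      rwa [heq] at h6
    have htle' : t ≤ T * sigmabar u f Om J / ρ ^ (n + 1 - 1) := by
      rw [← hσdef]; exact htle
    refine ⟨t • f J - ρ • (((R (u j J))⁻¹ : SLd (n+1)) :
        Matrix (Fin (n+1)) (Fin (n+1)) ℝ).mulVec (cons1 0 x), ⟨x, hx, t, ht0, htle', rfl⟩, ?_⟩
    have hmc := main_comp n ρ hρne Rv Ru (f J) (cons1 0 x) F t h1
    rw [← hℜdef, ← hWdef, hRudef] at hmc
    have hfirst : t * F * ρ ^ n - ρ ^ (n+1) * W = s := by
      have h7 : t * (F * ρ ^ n) = s + ρ ^ (n+1) * W := by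
        rw [htdef]; exact div_mul_cancel₀ _ hD.ne'
      linarith
    show ((Dmat (n+1) ρ * Rv : SLd (n+1)) : Matrix (Fin (n+1)) (Fin (n+1)) ℝ).mulVec
        (t • f J - ρ • (((R (u j J))⁻¹ : SLd (n+1)) :
          Matrix (Fin (n+1)) (Fin (n+1)) ℝ).mulVec (cons1 0 x)) = _
    rw [hmc, hfirst, htR x]
    rfl
  · -- image ⊆ tildeA (-ε) (T+ε)
    rintro z ⟨y, ⟨x, hx, t, ht0, htle, rfl⟩, rfl⟩
    have hPe : sigmabar u f Om J * enorm' (f J) = P := by rw [hPdef, hσdef, hFdef]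
    rw [← hσdef] at htle
    have hpow : ρ ^ (n + 1 - 1) = ρ ^ n := rfl
    rw [hpow] at htle
    set W : ℝ := (ℜ.mulVec (cons1 (d := n+1) 0 x)) 0 with hWdef
    clear_value W
    have hWb : |W| ≤ Cw := by rw [hWdef]; exact hwb x (hSx j x J hx)
    have hWkey : ρ ^ (n+1) * |W| < ε * P := hkey W hWb
    have hD : (0:ℝ) < F * ρ ^ n := mul_pos hF (pow_pos hρ0 n)
    have h5 : ρ ^ (n+1) * (-|W|) ≤ ρ ^ (n+1) * W :=
      mul_le_mul_of_nonneg_left (neg_abs_le W) (pow_nonneg hρ0.le _)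
    have h5' : ρ ^ (n+1) * W ≤ ρ ^ (n+1) * |W| :=
      mul_le_mul_of_nonneg_left (le_abs_self W) (pow_nonneg hρ0.le _)
    have hts : t * F * ρ ^ n ≤ T * P := by
      have h1' : t * (F * ρ ^ n) ≤ (T * σ / ρ ^ n) * (F * ρ ^ n) :=
        mul_le_mul_of_nonneg_right htle hD.le
      have h2' : (T * σ / ρ ^ n) * (F * ρ ^ n) = T * P := by
        rw [hPdef, div_mul_eq_mul_div, div_eq_iff (pow_pos hρ0 n).ne']; ring
      linarith
    have htpos : 0 < t * F * ρ ^ n := mul_pos (mul_pos ht0 hF) (pow_pos hρ0 n)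
    refine ⟨x, hx, t * F * ρ ^ n - ρ ^ (n+1) * W, ?_, ?_, ?_⟩
    · rw [hPe]; linarith
    · rw [hPe]; linarith
    · have hmc := main_comp n ρ hρne Rv Ru (f J) (cons1 0 x) F t h1
      rw [← hℜdef, ← hWdef, hRudef] at hmc
      show ((Dmat (n+1) ρ * Rv : SLd (n+1)) : Matrix (Fin (n+1)) (Fin (n+1)) ℝ).mulVec
          (t • f J - ρ • (((R (u j J))⁻¹ : SLd (n+1)) :
            Matrix (Fin (n+1)) (Fin (n+1)) ℝ).mulVec (cons1 0 x)) = _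
      rw [hmc, htR x]
      rfl
end
end
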